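/- arXiv:2307.06894 — 8 statements merged into one kernel-verified Lean document; each statement's English description precedes it below -/
import Mathlib

section
/- Let A, B be self-adjoint operators on a finite-dimensional complex inner product space H and C a self-adjoint operator on a finite-dimensional space K. If the eigenvalue vector of A majorizes that of B, then the eigenvalue vector of C ⊗ A majorizes that of C ⊗ B. -/
/-!
If `C = U diag(c) U*` and `A = V diag(a) V*`, then `C ⊗ A = (U ⊗ V) diag(c k * a i) (U ⊗ V)*`,
so up to reindexing `λ(C ⊗ A)` is the concatenation over `k` of the scaled vectors `c k • λ(A)`,
and likewise for `B`. Scaling by `c k` preserves `λ(A) ⪰ λ(B)` (for `c k < 0` because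
majorization also bounds the smallest partial sums from below), and concatenation preserves
majorization fibrewise.
-/

open Finset Matrix
open scoped Kronecker ComplexOrder

/-- `x` majorizes `y`: every subset-sum of `y` is dominated by some subset-sum of `x`
of the same cardinality (equivalently, all top-`k` partial sums of the non-increasing
rearrangements dominate), and the total sums agree. -/
def Majorizes {ι κ : Type*} [Fintype ι] [Fintype κ] (x : ι → ℝ) (y : κ → ℝ) : Prop :=
  (∀ t : Finset κ, ∃ s : Finset ι, s.card = t.card ∧ ∑ j ∈ t, y j ≤ ∑ i ∈ s, x i) ∧
    ∑ j, y j = ∑ i, x i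

namespace Majorizes

section SameIndex

variable {ι : Type*} [Fintype ι] [DecidableEq ι] {x y : ι → ℝ}

theorem exists_sum_le (h : Majorizes x y) (t : Finset ι) :
    ∃ s : Finset ι, s.card = t.card ∧ ∑ i ∈ s, x i ≤ ∑ j ∈ t, y j := by
  obtain ⟨s, hcard, hsum⟩ := h.1 tᶜ
  refine ⟨sᶜ, by rw [card_compl, hcard, card_compl, Nat.sub_sub_self (card_le_univ t)], ?_⟩
  linarith [sum_add_sum_compl s x, sum_add_sum_compl t y, h.2]

theorem const_mul (h : Majorizes x y) (c : ℝ) :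
    Majorizes (fun i ↦ c * x i) (fun j ↦ c * y j) := by
  refine ⟨fun t ↦ ?_, by simp only [← mul_sum, h.2]⟩
  simp only [← mul_sum]
  rcases le_total 0 c with hc | hc
  · obtain ⟨s, hcard, hsum⟩ := h.1 t
    exact ⟨s, hcard, mul_le_mul_of_nonneg_left hsum hc⟩
  · obtain ⟨s, hcard, hsum⟩ := h.exists_sum_le t
    exact ⟨s, hcard, mul_le_mul_of_nonpos_left hsum hc⟩

end SameIndex

variable {ι κ : Type*} [Fintype ι] [Fintype κ] {x : ι → ℝ} {y : κ → ℝ}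

theorem comp_equiv (h : Majorizes x y) {ι' κ' : Type*} [Fintype ι'] [Fintype κ']
    (e : ι' ≃ ι) (f : κ' ≃ κ) : Majorizes (x ∘ e) (y ∘ f) := by
  refine ⟨fun t ↦ ?_, by simp only [Function.comp_apply, e.sum_comp, f.sum_comp, h.2]⟩
  obtain ⟨s, hcard, hsum⟩ := h.1 (t.map f.toEmbedding)
  refine ⟨s.map e.symm.toEmbedding, by simpa using hcard, ?_⟩
  simpa [sum_map] using hsum

end Majorizes

theorem majorizes_uncurry {K ι κ : Type*} [Fintype K] [Fintype ι] [Fintype κ]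
    {x : K → ι → ℝ} {y : K → κ → ℝ} (h : ∀ k, Majorizes (x k) (y k)) :
    Majorizes (Function.uncurry x) (Function.uncurry y) := by
  classical
  refine ⟨fun t ↦ ?_, ?_⟩
  · let fibre (k : K) : Finset κ := t.preimage (Prod.mk k) (Prod.mk_right_injective k).injOn
    have ht (p : K × κ) : p ∈ t ↔ p.1 ∈ univ ∧ p.2 ∈ fibre p.1 := by simp [fibre]
    choose s hcard hsum using fun k ↦ (h k).1 (fibre k)
    let S : Finset (K × ι) := univ.filter fun p ↦ p.2 ∈ s p.1
    have hs (p : K × ι) : p ∈ S ↔ p.1 ∈ univ ∧ p.2 ∈ s p.1 := by simp [S]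
    refine ⟨S, ?_, ?_⟩
    · rw [card_eq_sum_ones, card_eq_sum_ones t, sum_finset_product _ _ _ hs,
        sum_finset_product _ _ _ ht]
      simp [hcard]
    · rw [sum_finset_product _ _ _ hs, sum_finset_product _ _ _ ht]
      exact sum_le_sum fun k _ ↦ hsum k
  · simp only [Fintype.sum_prod_type, Function.uncurry_apply_pair, fun k ↦ (h k).2]

theorem Fintype.exists_equiv_comp_eq_of_map_univ_eq {α β γ : Type*} [Fintype α] [Fintype β]
    {f : α → γ} {g : β → γ} (h : univ.val.map f = univ.val.map g) :
    ∃ e : α ≃ β, g ∘ e = f := by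
  classical
  have hfibre (c : γ) : Fintype.card {a // f a = c} = Fintype.card {b // g b = c} := by
    have := congrArg (Multiset.count c) h
    simp only [Multiset.count_map, Fintype.card_subtype] at this ⊢
    simpa [eq_comm, Finset.card_def, Finset.filter_val] using this
  exact ⟨.ofFiberEquiv fun c ↦ Fintype.equivOfCardEq (hfibre c),
    funext (Equiv.ofFiberEquiv_map _)⟩

namespace Matrix.IsHermitian

variable {𝕜 m n : Type*} [RCLike 𝕜] [Fintype m] [Fintype n] [DecidableEq m] [DecidableEq n]
  {A : Matrix m m 𝕜} {B : Matrix n n 𝕜}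

open Polynomial in
theorem charpoly_kronecker (hA : A.IsHermitian) (hB : B.IsHermitian) :
    (A ⊗ₖ B).charpoly =
      ∏ p : m × n, (X - C ((hA.eigenvalues p.1 * hB.eigenvalues p.2 : ℝ) : 𝕜)) := by
  set U : Matrix m m 𝕜 := (hA.eigenvectorUnitary : Matrix m m 𝕜)
  set V : Matrix n n 𝕜 := (hB.eigenvectorUnitary : Matrix n n 𝕜)
  set D : Matrix (m × n) (m × n) 𝕜 :=
    diagonal fun p ↦ ((hA.eigenvalues p.1 * hB.eigenvalues p.2 : ℝ) : 𝕜)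
  have hconj : A ⊗ₖ B = (U ⊗ₖ V) * (D * (star U ⊗ₖ star V)) := by
    conv_lhs => rw [hA.spectral_theorem, hB.spectral_theorem]
    simp only [Unitary.conjStarAlgAut_apply, mul_kronecker_mul, diagonal_kronecker_diagonal,
      mul_assoc, U, V, D, Function.comp_apply, RCLike.ofReal_mul]
  rw [hconj, charpoly_mul_comm, mul_assoc, ← mul_kronecker_mul, Unitary.coe_star_mul_self,
    Unitary.coe_star_mul_self, one_kronecker_one, mul_one, charpoly_diagonal]

theorem map_eigenvalues_kronecker (hA : A.IsHermitian) (hB : B.IsHermitian)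
    (hAB : (A ⊗ₖ B).IsHermitian) :
    univ.val.map hAB.eigenvalues =
      univ.val.map fun p : m × n ↦ hA.eigenvalues p.1 * hB.eigenvalues p.2 := by
  apply Multiset.map_injective (RCLike.ofReal_injective (K := 𝕜))
  rw [Multiset.map_map, ← hAB.roots_charpoly_eq_eigenvalues, charpoly_kronecker hA hB,
    Polynomial.roots_prod _ _ (prod_ne_zero_iff.mpr fun _ _ ↦ Polynomial.X_sub_C_ne_zero _)]
  simp only [Polynomial.roots_X_sub_C, Multiset.bind_singleton, Multiset.map_map]
  rfl

end Matrix.IsHermitian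

/-- if `λ(A)` majorizes `λ(B)` for self-adjoint `A, B`, then
`λ(C ⊗ A)` majorizes `λ(C ⊗ B)` for any self-adjoint `C`. -/
theorem kronecker_majorizes {dH dK : ℕ}
    (A B : Matrix (Fin dH) (Fin dH) ℂ) (C : Matrix (Fin dK) (Fin dK) ℂ)
    (hA : A.IsHermitian) (hB : B.IsHermitian) (hC : C.IsHermitian)
    (hmaj : Majorizes hA.eigenvalues hB.eigenvalues)
    (hCA : (C ⊗ₖ A).IsHermitian) (hCB : (C ⊗ₖ B).IsHermitian) :
    Majorizes hCA.eigenvalues hCB.eigenvalues := by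
  obtain ⟨e, he⟩ :=
    Fintype.exists_equiv_comp_eq_of_map_univ_eq (hC.map_eigenvalues_kronecker hA hCA)
  obtain ⟨f, hf⟩ :=
    Fintype.exists_equiv_comp_eq_of_map_univ_eq (hC.map_eigenvalues_kronecker hB hCB)
  rw [← he, ← hf]
  exact (majorizes_uncurry fun k ↦ hmaj.const_mul (hC.eigenvalues k)).comp_equiv e f
end

section
/- Let C_1, …, C_ℓ be simultaneously diagonalizable positive semi-definite operators on K and A_1, …, A_ℓ self-adjoint operators on H. Fix an orthonormal basis (q_i) of H and let A_i↓ = Σ_j λ_j(A_i) |q_j⟩⟨q_j| be the diagonalized version of A_i with eigenvalues in non-increasing order in this fixed basis. Then for every probability measure (p_i)_{i=1}^ℓ, the operator Σ_i p_i C_i ⊗ A_i↓ majorizes Σ_i p_i C_i ⊗ A_i. -/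
open Finset Matrix
open scoped Kronecker ComplexOrder

/-- The non-increasing rearrangement `x↓` of a vector `x ∈ ℝ^d`. -/
noncomputable def sortDesc {d : ℕ} (x : Fin d → ℝ) : Fin d → ℝ :=
  x ∘ ⇑(Tuple.sort (fun j => OrderDual.toDual (x j)))

/-- `S↓`: the diagonal matrix (in the fixed standard basis) whose diagonal consists of the
eigenvalues of `S` in non-increasing order. -/
noncomputable def matDown {d : ℕ} {S : Matrix (Fin d) (Fin d) ℂ} (hS : S.IsHermitian) :
    Matrix (Fin d) (Fin d) ℂ :=
  Matrix.diagonal fun i => (sortDesc hS.eigenvalues i : ℂ)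

/-!
Conjugating by `U ⊗ 1` turns `Σ pᵢ Cᵢ ⊗ Aᵢ↓` into a diagonal matrix. For a set `t` of eigenvectors
of `Σ pᵢ Cᵢ ⊗ Aᵢ`, the sum of their eigenvalues is `Σ pᵢ` times a weighted trace of `Cᵢ ⊗ Aᵢ` in
its eigenbasis `U ⊗ Eᵢ`, with weights in `[0, 1]`. The bases `U ⊗ Eᵢ` differ only by unitaries
acting inside the blocks `{j} × H`, so the total weight `κⱼ` of a block does not depend on `i`.
Hence, for all `i` at once, the weight of block `j` may be moved onto its first `κⱼ` positions
(fractionally at the boundary), where `Aᵢ↓` has the largest eigenvalues of `Aᵢ`. The result is a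
weighted trace of `Σ pᵢ Cᵢ ⊗ Aᵢ↓` with weights in `[0, 1]` summing to `|t|`, which Ky Fan's
maximum principle bounds by a sum of `|t|` of its eigenvalues.
-/

theorem sum_mul_le_sum_mul_of_sub_mul_sub_nonpos {ι : Type*} (s : Finset ι) {d a b : ι → ℝ}
    (θ : ℝ) (hab : ∑ ν ∈ s, a ν = ∑ ν ∈ s, b ν) (h : ∀ ν ∈ s, (d ν - θ) * (a ν - b ν) ≤ 0) :
    ∑ ν ∈ s, d ν * a ν ≤ ∑ ν ∈ s, d ν * b ν := by
  have hsplit : ∑ ν ∈ s, d ν * a ν - ∑ ν ∈ s, d ν * b ν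
      = ∑ ν ∈ s, (d ν - θ) * (a ν - b ν) + θ * (∑ ν ∈ s, a ν - ∑ ν ∈ s, b ν) := by
    simp only [mul_sub, sub_mul, sum_sub_distrib, mul_sum]
    ring
  rw [hab, sub_self, mul_zero, add_zero] at hsplit
  linarith [sum_nonpos h]

theorem exists_card_eq_sum_mul_le_sum {ι : Type*} [Fintype ι] (d : ι → ℝ) {c : ι → ℝ}
    (hc0 : ∀ ν, 0 ≤ c ν) (hc1 : ∀ ν, c ν ≤ 1) {k : ℕ} (hk : ∑ ν, c ν = k) :
    ∃ s : Finset ι, s.card = k ∧ ∑ ν, d ν * c ν ≤ ∑ ν ∈ s, d ν := by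
  classical
  have hk_le : k ≤ Fintype.card ι := by
    have : (k : ℝ) ≤ Fintype.card ι := hk ▸ (sum_le_sum fun ν _ => hc1 ν).trans (by simp)
    exact_mod_cast this
  obtain ⟨s, hs, hmax⟩ := exists_max_image (powersetCard k univ) (fun s => ∑ ν ∈ s, d ν)
    (powersetCard_nonempty.2 (by simpa using hk_le))
  rw [mem_powersetCard_univ] at hs
  refine ⟨s, hs, ?_⟩
  rcases s.eq_empty_or_nonempty with rfl | hne
  · have hc : ∀ ν ∈ univ, c ν = 0 :=
      (sum_eq_zero_iff_of_nonneg fun ν _ => hc0 ν).1 (by simp [hk, ← hs])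
    simp [hc]
  -- swapping the smallest element of `s` for an outside one cannot increase the sum
  obtain ⟨ν₀, hν₀, hmin⟩ := exists_min_image s d hne
  have hout : ∀ ν ∉ s, d ν ≤ d ν₀ := by
    intro ν hν
    have hν' : ν ∉ s.erase ν₀ := fun h => hν (mem_of_mem_erase h)
    have := hmax (insert ν (s.erase ν₀)) (by
      rw [mem_powersetCard_univ, card_insert_of_notMem hν', card_erase_of_mem hν₀, hs]
      have := hs ▸ hne.card_pos
      omega)
    rw [sum_insert hν', sum_erase_eq_sub hν₀] at this
    linarith
  calc ∑ ν, d ν * c ν ≤ ∑ ν, d ν * (if ν ∈ s then 1 else 0) := by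
        refine sum_mul_le_sum_mul_of_sub_mul_sub_nonpos univ (d ν₀) ?_ fun ν _ => ?_
        · rw [hk, sum_boole, filter_mem_eq_inter, univ_inter, hs]
        · split_ifs with hν
          · exact mul_nonpos_of_nonneg_of_nonpos (by linarith [hmin ν hν]) (by linarith [hc1 ν])
          · exact mul_nonpos_of_nonpos_of_nonneg (by linarith [hout ν hν]) (by linarith [hc0 ν])
    _ = ∑ ν ∈ s, d ν := by simp

/-- The fractional indicator of the first `κ` positions: `1` for `r + 1 ≤ κ`, `κ - r` for
`r ≤ κ < r + 1` and `0` for `κ ≤ r`. -/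
noncomputable def topWeight (κ : ℝ) (r : ℕ) : ℝ := max 0 (κ - r) - max 0 (κ - (r + 1))

theorem topWeight_nonneg (κ : ℝ) (r : ℕ) : 0 ≤ topWeight κ r := by
  unfold topWeight
  linarith [max_le_max_left 0 (by linarith : κ - (r + 1) ≤ κ - r)]

theorem topWeight_le_one (κ : ℝ) (r : ℕ) : topWeight κ r ≤ 1 := by
  unfold topWeight
  rcases le_total (κ - r) 0 with h | h
  · rw [max_eq_left h]; linarith [le_max_left 0 (κ - (r + 1))]
  · rw [max_eq_right h]; linarith [le_max_right 0 (κ - (r + 1))]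

theorem topWeight_of_add_one_le {κ : ℝ} {r : ℕ} (h : (r : ℝ) + 1 ≤ κ) : topWeight κ r = 1 := by
  rw [topWeight, max_eq_right (by linarith), max_eq_right (by linarith)]
  ring

theorem topWeight_of_le {κ : ℝ} {r : ℕ} (h : κ ≤ r) : topWeight κ r = 0 := by
  rw [topWeight, max_eq_left (by linarith), max_eq_left (by linarith), sub_zero]

theorem sum_topWeight {n : ℕ} {κ : ℝ} (h0 : 0 ≤ κ) (hn : κ ≤ n) :
    ∑ r : Fin n, topWeight κ r = κ := by
  rw [Fin.sum_univ_eq_sum_range (topWeight κ)]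
  have := sum_range_sub' (fun m : ℕ => max 0 (κ - m)) n
  simp only [Nat.cast_zero, sub_zero, Nat.cast_add_one, max_eq_right h0,
    max_eq_left (sub_nonpos.2 hn)] at this
  simpa [topWeight] using this

theorem sum_mul_le_sum_mul_topWeight_of_antitone {n : ℕ} {μ c : Fin n → ℝ} (hμ : Antitone μ)
    (hc0 : ∀ r, 0 ≤ c r) (hc1 : ∀ r, c r ≤ 1) :
    ∑ r, μ r * c r ≤ ∑ r, μ r * topWeight (∑ r, c r) r := by
  set κ := ∑ r, c r
  have hκ0 : 0 ≤ κ := sum_nonneg fun r _ => hc0 r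
  have hκn : κ ≤ n := (sum_le_sum fun r _ => hc1 r).trans (by simp)
  have hsum : ∑ r, c r = ∑ r : Fin n, topWeight κ r := (sum_topWeight hκ0 hκn).symm
  by_cases hm : ⌊κ⌋₊ < n
  · -- the weights move from the positions after `⌊κ⌋₊` to the (larger) ones before it
    set m : Fin n := ⟨⌊κ⌋₊, hm⟩
    refine sum_mul_le_sum_mul_of_sub_mul_sub_nonpos univ (μ m) hsum fun r _ => ?_
    rcases lt_trichotomy r m with h | rfl | h
    · have hr : (r : ℝ) + 1 ≤ κ := by
        have : (r : ℕ) + 1 ≤ ⌊κ⌋₊ := h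
        exact (by exact_mod_cast this : ((r : ℕ) : ℝ) + 1 ≤ ⌊κ⌋₊).trans (Nat.floor_le hκ0)
      rw [topWeight_of_add_one_le hr]
      exact mul_nonpos_of_nonneg_of_nonpos (sub_nonneg.2 (hμ h.le)) (by linarith [hc1 r])
    · simp
    · have hr : κ ≤ r := by
        have : ⌊κ⌋₊ + 1 ≤ (r : ℕ) := h
        exact (Nat.lt_floor_add_one κ).le.trans (by exact_mod_cast this)
      rw [topWeight_of_le hr]
      exact mul_nonpos_of_nonpos_of_nonneg (sub_nonpos.2 (hμ h.le)) (by linarith [hc0 r])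
  · -- here `κ = n`, so `c` and the weights are both identically `1`
    have hw : ∀ r : Fin n, topWeight κ r = 1 := fun r =>
      topWeight_of_add_one_le <| (by exact_mod_cast r.2 : ((r : ℕ) : ℝ) + 1 ≤ n).trans
        ((by exact_mod_cast not_lt.1 hm : (n : ℝ) ≤ ⌊κ⌋₊).trans (Nat.floor_le hκ0))
    have hc : ∀ r ∈ univ, c r = topWeight κ r :=
      (sum_eq_sum_iff_of_le fun r _ => (hw r).symm ▸ hc1 r).1 hsum
    exact (sum_congr rfl fun r hr => by rw [hc r hr]).le

theorem antitone_sortDesc {n : ℕ} (x : Fin n → ℝ) : Antitone (sortDesc x) :=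
  fun _ _ hab => Tuple.monotone_sort (fun j => OrderDual.toDual (x j)) hab

theorem sum_sortDesc {n : ℕ} (x : Fin n → ℝ) : ∑ r, sortDesc x r = ∑ r, x r :=
  Equiv.sum_comp _ x

theorem sum_mul_le_sum_sortDesc_mul_topWeight {n : ℕ} (x : Fin n → ℝ) {c : Fin n → ℝ}
    (hc0 : ∀ r, 0 ≤ c r) (hc1 : ∀ r, c r ≤ 1) :
    ∑ r, x r * c r ≤ ∑ r, sortDesc x r * topWeight (∑ r, c r) r := by
  set σ := Tuple.sort fun j => OrderDual.toDual (x j)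
  rw [← Equiv.sum_comp σ (fun r => x r * c r), ← Equiv.sum_comp σ c]
  exact sum_mul_le_sum_mul_topWeight_of_antitone (antitone_sortDesc x)
    (fun r => hc0 (σ r)) (fun r => hc1 (σ r))

section WeightedTrace

variable {ι : Type*} [Fintype ι]

def weightedTrace (γ : ι → ℝ) (X : Matrix ι ι ℂ) : ℝ := ∑ m, γ m * (X m m).re

theorem weightedTrace_conj_sum_smul {κ : Type*} (s : Finset κ) (γ : ι → ℝ) (W : Matrix ι ι ℂ)
    (p : κ → ℝ) (X : κ → Matrix ι ι ℂ) :
    weightedTrace γ (star W * (∑ i ∈ s, p i • X i) * W)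
      = ∑ i ∈ s, p i * weightedTrace γ (star W * X i * W) := by
  simp only [weightedTrace, mul_sum, Matrix.sum_mul, Matrix.mul_smul, Matrix.smul_mul,
    Matrix.sum_apply, Matrix.smul_apply, Complex.re_sum, Complex.smul_re]
  rw [sum_comm]
  exact sum_congr rfl fun i _ => sum_congr rfl fun m _ => by ring

def rowWeight (W : Matrix ι ι ℂ) (γ : ι → ℝ) (μ : ι) : ℝ := ∑ ν, γ ν * Complex.normSq (W μ ν)

theorem rowWeight_nonneg (W : Matrix ι ι ℂ) {γ : ι → ℝ} (hγ0 : ∀ ν, 0 ≤ γ ν) (μ : ι) :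
    0 ≤ rowWeight W γ μ :=
  sum_nonneg fun ν _ => mul_nonneg (hγ0 ν) (Complex.normSq_nonneg _)

variable [DecidableEq ι]

theorem weightedTrace_diagonal (γ d : ι → ℝ) :
    weightedTrace γ (diagonal fun m => (d m : ℂ)) = ∑ m, γ m * d m := by
  simp [weightedTrace]

theorem sum_normSq_row_eq_one {W : Matrix ι ι ℂ} (hW : W ∈ unitaryGroup ι ℂ) (μ : ι) :
    ∑ ν, Complex.normSq (W μ ν) = 1 := by
  have h := congrArg (fun M => M μ μ) (mem_unitaryGroup_iff.mp hW)
  simp only [mul_apply, star_apply, one_apply_eq, RCLike.star_def, Complex.mul_conj] at h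
  exact_mod_cast h

theorem sum_normSq_col_eq_one {W : Matrix ι ι ℂ} (hW : W ∈ unitaryGroup ι ℂ) (ν : ι) :
    ∑ μ, Complex.normSq (W μ ν) = 1 := by
  simpa [star_apply, Complex.normSq_conj] using
    sum_normSq_row_eq_one (Unitary.star_mem hW) ν

theorem rowWeight_le_one {W : Matrix ι ι ℂ} (hW : W ∈ unitaryGroup ι ℂ) {γ : ι → ℝ}
    (hγ1 : ∀ ν, γ ν ≤ 1) (μ : ι) : rowWeight W γ μ ≤ 1 :=
  (sum_le_sum fun ν _ => mul_le_of_le_one_left (Complex.normSq_nonneg _) (hγ1 ν)).trans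
    (sum_normSq_row_eq_one hW μ).le

theorem sum_rowWeight {W : Matrix ι ι ℂ} (hW : W ∈ unitaryGroup ι ℂ) (γ : ι → ℝ) :
    ∑ μ, rowWeight W γ μ = ∑ ν, γ ν := by
  simp only [rowWeight]
  rw [sum_comm]
  simp [← mul_sum, sum_normSq_col_eq_one hW]

theorem conj_diagonal_apply_self (W : Matrix ι ι ℂ) (d : ι → ℝ) (ν : ι) :
    (star W * diagonal (fun μ => (d μ : ℂ)) * W) ν ν = ∑ μ, d μ * Complex.normSq (W μ ν) := by
  rw [mul_apply]
  simp_rw [mul_diagonal, star_apply, RCLike.star_def, Complex.ofReal_sum, Complex.ofReal_mul,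
    Complex.normSq_eq_conj_mul_self]
  exact sum_congr rfl fun μ _ => by ring

theorem weightedTrace_conj_diagonal (γ : ι → ℝ) (W : Matrix ι ι ℂ) (d : ι → ℝ) :
    weightedTrace γ (star W * diagonal (fun μ => (d μ : ℂ)) * W)
      = ∑ μ, d μ * rowWeight W γ μ := by
  simp only [weightedTrace, conj_diagonal_apply_self, Complex.ofReal_re, rowWeight, mul_sum]
  rw [sum_comm]
  exact sum_congr rfl fun ν _ => sum_congr rfl fun μ _ => by ring

theorem sum_mul_eigenvalues_eq_weightedTrace {M : Matrix ι ι ℂ} (hM : M.IsHermitian)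
    (γ : ι → ℝ) :
    ∑ m, γ m * hM.eigenvalues m
      = weightedTrace γ (star (hM.eigenvectorUnitary : Matrix ι ι ℂ) * M *
          hM.eigenvectorUnitary) := by
  have h := hM.conjStarAlgAut_star_eigenvectorUnitary
  rw [Unitary.conjStarAlgAut_star_apply] at h
  rw [h]
  exact (weightedTrace_diagonal γ _).symm

/-- Ky Fan's maximum principle, for fractional weights. -/
theorem exists_card_eq_weightedTrace_conj_le {M : Matrix ι ι ℂ} (hM : M.IsHermitian)
    {V : Matrix ι ι ℂ} (hV : V ∈ unitaryGroup ι ℂ) {γ : ι → ℝ} (hγ0 : ∀ ν, 0 ≤ γ ν)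
    (hγ1 : ∀ ν, γ ν ≤ 1) {k : ℕ} (hk : ∑ ν, γ ν = k) :
    ∃ s : Finset ι, s.card = k ∧
      weightedTrace γ (star V * M * V) ≤ ∑ μ ∈ s, hM.eigenvalues μ := by
  set E : Matrix ι ι ℂ := ↑hM.eigenvectorUnitary
  have hW : star E * V ∈ unitaryGroup ι ℂ := mul_mem (Unitary.star_mem (SetLike.coe_mem _)) hV
  have hMV : star V * M * V = star (star E * V) * diagonal (fun μ => (hM.eigenvalues μ : ℂ)) *
      (star E * V) := by
    conv_lhs => rw [hM.spectral_theorem, Unitary.conjStarAlgAut_apply]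
    simp only [star_mul, star_star, Matrix.mul_assoc]
    rfl
  rw [hMV, weightedTrace_conj_diagonal]
  exact exists_card_eq_sum_mul_le_sum _ (rowWeight_nonneg _ hγ0) (rowWeight_le_one hW hγ1)
    ((sum_rowWeight hW γ).trans hk)

end WeightedTrace

theorem sum_normSq_mul_apply {η ι : Type*} [Fintype η] [DecidableEq η] {B : Matrix η η ℂ}
    (hB : B ∈ unitaryGroup η ℂ) (X : Matrix η ι ℂ) (ν : ι) :
    ∑ r, Complex.normSq ((B * X) r ν) = ∑ r, Complex.normSq (X r ν) := by
  have hnormSq : ∀ Y : Matrix η ι ℂ, (Yᴴ * Y) ν ν = ∑ r, (Complex.normSq (Y r ν) : ℂ) :=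
    fun Y => by simp [mul_apply, Complex.normSq_eq_conj_mul_self]
  have h := hnormSq (B * X)
  rw [conjTranspose_mul, Matrix.mul_assoc, ← Matrix.mul_assoc Bᴴ, ← star_eq_conjTranspose,
    mem_unitaryGroup_iff'.mp hB, Matrix.one_mul, hnormSq X] at h
  exact_mod_cast h.symm

section Kronecker

variable {κ η : Type*} [Fintype κ] [Fintype η]

theorem kronecker_conj (P X : Matrix κ κ ℂ) (Q Y : Matrix η η ℂ) :
    (P * X * star P) ⊗ₖ (Q * Y * star Q) = (P ⊗ₖ Q) * (X ⊗ₖ Y) * star (P ⊗ₖ Q) := by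
  simp only [star_eq_conjTranspose, conjTranspose_kronecker, mul_kronecker_mul]

variable [DecidableEq κ] [DecidableEq η]

theorem conj_kronecker_one {U : Matrix κ κ ℂ} (hU : U ∈ unitaryGroup κ ℂ) (D : Matrix κ κ ℂ)
    (B : Matrix η η ℂ) :
    star (U ⊗ₖ (1 : Matrix η η ℂ)) * ((U * D * star U) ⊗ₖ B) * (U ⊗ₖ 1) = D ⊗ₖ B := by
  have hUU := mem_unitaryGroup_iff'.mp hU
  rw [star_eq_conjTranspose, conjTranspose_kronecker, conjTranspose_one, ← star_eq_conjTranspose,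
    ← mul_kronecker_mul, ← mul_kronecker_mul, Matrix.one_mul, Matrix.mul_one]
  simp only [← Matrix.mul_assoc, hUU, Matrix.one_mul]
  rw [Matrix.mul_assoc, hUU, Matrix.mul_one]

omit [DecidableEq η] in
theorem one_kronecker_mul_apply (B : Matrix η η ℂ) {ι : Type*} (W : Matrix (κ × η) ι ℂ)
    (j : κ) (r : η) (ν : ι) :
    (((1 : Matrix κ κ ℂ) ⊗ₖ B) * W) (j, r) ν = (B * W.submatrix (Prod.mk j) id) r ν := by
  simp [mul_apply, Fintype.sum_prod_type, one_apply, ite_mul]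

def blockWeight (W : Matrix (κ × η) (κ × η) ℂ) (γ : κ × η → ℝ) (j : κ) : ℝ :=
  ∑ r, rowWeight W γ (j, r)

theorem blockWeight_one_kronecker_mul {B : Matrix η η ℂ} (hB : B ∈ unitaryGroup η ℂ)
    (W : Matrix (κ × η) (κ × η) ℂ) (γ : κ × η → ℝ) (j : κ) :
    blockWeight (((1 : Matrix κ κ ℂ) ⊗ₖ B) * W) γ j = blockWeight W γ j := by
  simp only [blockWeight, rowWeight, one_kronecker_mul_apply]
  rw [sum_comm, sum_comm (γ := η)]
  refine sum_congr rfl fun ν _ => ?_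
  rw [← mul_sum, ← mul_sum, sum_normSq_mul_apply hB]
  rfl

theorem sum_topWeight_blockWeight {n : ℕ} {W : Matrix (κ × Fin n) (κ × Fin n) ℂ}
    (hW : W ∈ unitaryGroup (κ × Fin n) ℂ) {γ : κ × Fin n → ℝ} (hγ0 : ∀ ν, 0 ≤ γ ν)
    (hγ1 : ∀ ν, γ ν ≤ 1) :
    ∑ ν : κ × Fin n, topWeight (blockWeight W γ ν.1) ν.2 = ∑ ν, γ ν := by
  have hle : ∀ j, blockWeight W γ j ≤ n := fun j =>
    (sum_le_sum fun r _ => rowWeight_le_one hW hγ1 (j, r)).trans (by simp)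
  rw [Fintype.sum_prod_type, ← sum_rowWeight hW γ, Fintype.sum_prod_type]
  exact sum_congr rfl fun j _ =>
    sum_topWeight (sum_nonneg fun r _ => rowWeight_nonneg W hγ0 (j, r)) (hle j)

end Kronecker

theorem weightedTrace_conj_kronecker_le {κ : Type*} [Fintype κ] [DecidableEq κ] {n : ℕ}
    {C U : Matrix κ κ ℂ} (hU : U ∈ unitaryGroup κ ℂ) {d : κ → ℝ} (hd : ∀ j, 0 ≤ d j)
    (hC : C = U * diagonal (fun j => (d j : ℂ)) * star U)
    {A : Matrix (Fin n) (Fin n) ℂ} (hA : A.IsHermitian)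
    {W : Matrix (κ × Fin n) (κ × Fin n) ℂ} (hW : W ∈ unitaryGroup (κ × Fin n) ℂ)
    {γ : κ × Fin n → ℝ} (hγ0 : ∀ ν, 0 ≤ γ ν) (hγ1 : ∀ ν, γ ν ≤ 1) :
    weightedTrace γ (star W * (C ⊗ₖ A) * W)
      ≤ weightedTrace
          (fun ν =>
            topWeight (blockWeight (star (U ⊗ₖ (1 : Matrix (Fin n) (Fin n) ℂ)) * W) γ ν.1) ν.2)
          (star (U ⊗ₖ (1 : Matrix (Fin n) (Fin n) ℂ)) * (C ⊗ₖ matDown hA) * (U ⊗ₖ 1)) := by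
  set V := U ⊗ₖ (1 : Matrix (Fin n) (Fin n) ℂ)
  set E : Matrix (Fin n) (Fin n) ℂ := ↑hA.eigenvectorUnitary
  have hE : E ∈ unitaryGroup (Fin n) ℂ := SetLike.coe_mem _
  -- in the eigenbasis `U ⊗ E` of `C ⊗ A` the weights of `γ` are those of `star V * W`, mixed
  -- unitarily inside each block `{j} × Fin n`
  set W' := ((1 : Matrix κ κ ℂ) ⊗ₖ star E) * (star V * W)
  have hW' : W' ∈ unitaryGroup (κ × Fin n) ℂ :=
    mul_mem (kronecker_mem_unitary (one_mem _) (Unitary.star_mem hE))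
      (mul_mem (Unitary.star_mem (kronecker_mem_unitary hU (one_mem _))) hW)
  have hCA : star W * (C ⊗ₖ A) * W
      = star W' * diagonal (fun ν => ((d ν.1 * hA.eigenvalues ν.2 : ℝ) : ℂ)) * W' := by
    have hW'eq : W' = star (U ⊗ₖ E) * W := by
      simp only [W', V, star_eq_conjTranspose, conjTranspose_kronecker, conjTranspose_one,
        ← Matrix.mul_assoc, ← mul_kronecker_mul, Matrix.one_mul, Matrix.mul_one]
    have hdiag : diagonal (fun ν => ((d ν.1 * hA.eigenvalues ν.2 : ℝ) : ℂ))
        = diagonal (fun j => (d j : ℂ)) ⊗ₖ diagonal (RCLike.ofReal ∘ hA.eigenvalues) := by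
      rw [diagonal_kronecker_diagonal]
      simp
    conv_lhs => rw [hC, hA.spectral_theorem, Unitary.conjStarAlgAut_apply, kronecker_conj]
    rw [hW'eq, hdiag, star_mul, star_star]
    simp only [Matrix.mul_assoc]
    rfl
  have hCA' : star V * (C ⊗ₖ matDown hA) * V
      = diagonal (fun ν => ((d ν.1 * sortDesc hA.eigenvalues ν.2 : ℝ) : ℂ)) := by
    rw [hC, conj_kronecker_one hU, matDown, diagonal_kronecker_diagonal]
    simp
  rw [hCA, hCA', weightedTrace_conj_diagonal, weightedTrace_diagonal, Fintype.sum_prod_type,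
    Fintype.sum_prod_type]
  refine sum_le_sum fun j _ => ?_
  have hblock := blockWeight_one_kronecker_mul (Unitary.star_mem hE) (star V * W) γ j
  have hsort := sum_mul_le_sum_sortDesc_mul_topWeight hA.eigenvalues
    (c := fun r => rowWeight W' γ (j, r)) (fun r => rowWeight_nonneg _ hγ0 _)
    (fun r => rowWeight_le_one hW' hγ1 _)
  dsimp only
  rw [← hblock]
  calc _ = d j * ∑ r, hA.eigenvalues r * rowWeight W' γ (j, r) := by
        rw [mul_sum]; exact sum_congr rfl fun r _ => by ring
    _ ≤ d j * ∑ r, sortDesc hA.eigenvalues r * topWeight (blockWeight W' γ j) r :=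
        mul_le_mul_of_nonneg_left hsort (hd j)
    _ = _ := by rw [mul_sum]; exact sum_congr rfl fun r _ => by ring

theorem nonneg_of_posSemidef_of_eq_conj_diagonal {κ : Type*} [Fintype κ] [DecidableEq κ]
    {C U : Matrix κ κ ℂ} (hC : C.PosSemidef) (hU : U ∈ unitaryGroup κ ℂ) {d : κ → ℝ}
    (hCd : C = U * diagonal (fun j => (d j : ℂ)) * star U) (j : κ) : 0 ≤ d j := by
  rw [hCd, (Unitary.isUnit_coe (U := ⟨U, hU⟩)).posSemidef_star_right_conjugate_iff,
    posSemidef_diagonal_iff] at hC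
  exact_mod_cast hC j

theorem trace_matDown {n : ℕ} {S : Matrix (Fin n) (Fin n) ℂ} (hS : S.IsHermitian) :
    (matDown hS).trace = S.trace := by
  rw [matDown, trace_diagonal, hS.trace_eq_sum_eigenvalues, ← Complex.ofReal_sum, sum_sortDesc]
  simp

theorem alignment_with_commuting_factor_general {dH dK ℓ : ℕ}
    (C : Fin ℓ → Matrix (Fin dK) (Fin dK) ℂ) (A : Fin ℓ → Matrix (Fin dH) (Fin dH) ℂ)
    (hC : ∀ i, (C i).PosSemidef)
    (hdiag : ∃ U ∈ Matrix.unitaryGroup (Fin dK) ℂ, ∀ i, ∃ dv : Fin dK → ℝ,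
      C i = U * Matrix.diagonal (fun j => (dv j : ℂ)) * star U)
    (hA : ∀ i, (A i).IsHermitian)
    (p : Fin ℓ → ℝ) (hp : ∀ i, 0 ≤ p i)
    (h₁ : (∑ i, p i • (C i ⊗ₖ matDown (hA i))).IsHermitian)
    (h₂ : (∑ i, p i • (C i ⊗ₖ A i)).IsHermitian) :
    Majorizes h₁.eigenvalues h₂.eigenvalues := by
  classical
  obtain ⟨U, hU, hCd⟩ := hdiag
  choose d hCd using hCd
  have hd i := nonneg_of_posSemidef_of_eq_conj_diagonal (hC i) hU (hCd i)
  refine ⟨fun t => ?_, ?_⟩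
  · set γ : Fin dK × Fin dH → ℝ := fun m => if m ∈ t then 1 else 0
    have hγ0 : ∀ m, 0 ≤ γ m := fun m => by positivity
    have hγ1 : ∀ m, γ m ≤ 1 := fun m => by unfold γ; split_ifs <;> norm_num
    have hV : U ⊗ₖ (1 : Matrix (Fin dH) (Fin dH) ℂ) ∈ unitaryGroup _ ℂ :=
      kronecker_mem_unitary hU (one_mem _)
    set E : Matrix (Fin dK × Fin dH) (Fin dK × Fin dH) ℂ := ↑h₂.eigenvectorUnitary
    have hE : E ∈ unitaryGroup _ ℂ := SetLike.coe_mem _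
    have hγt : ∑ m, γ m = t.card := by simp [γ]
    obtain ⟨s, hs, hle⟩ := exists_card_eq_weightedTrace_conj_le h₁ hV
      (fun ν => topWeight_nonneg _ _) (fun ν => topWeight_le_one _ _)
      ((sum_topWeight_blockWeight (mul_mem (Unitary.star_mem hV) hE) hγ0 hγ1).trans hγt)
    refine ⟨s, hs, le_trans ?_ hle⟩
    calc ∑ m ∈ t, h₂.eigenvalues m = weightedTrace γ (star E * _ * E) := by
          rw [← sum_mul_eigenvalues_eq_weightedTrace]; simp [γ]
      _ = _ := weightedTrace_conj_sum_smul _ _ _ _ _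
      _ ≤ _ := sum_le_sum fun i _ => mul_le_mul_of_nonneg_left
          (weightedTrace_conj_kronecker_le hU (hd i) (hCd i) (hA i) hE hγ0 hγ1) (hp i)
      _ = _ := (weightedTrace_conj_sum_smul _ _ _ _ _).symm
  · have htrace : (∑ i, p i • (C i ⊗ₖ A i)).trace = (∑ i, p i • (C i ⊗ₖ matDown (hA i))).trace := by
      simp only [trace_sum, trace_smul, trace_kronecker, trace_matDown]
    rw [h₁.trace_eq_sum_eigenvalues, h₂.trace_eq_sum_eigenvalues] at htrace
    exact_mod_cast htrace

/-- for simultaneously diagonalizable positive semi-definite `C_i` and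
self-adjoint `A_i`, and any probability measure `p`,
`Σ_i p_i C_i ⊗ A_i↓` majorizes `Σ_i p_i C_i ⊗ A_i`. -/
theorem alignment_with_commuting_factor {dH dK ℓ : ℕ}
    (C : Fin ℓ → Matrix (Fin dK) (Fin dK) ℂ) (A : Fin ℓ → Matrix (Fin dH) (Fin dH) ℂ)
    (hC : ∀ i, (C i).PosSemidef)
    (hdiag : ∃ U ∈ Matrix.unitaryGroup (Fin dK) ℂ, ∀ i, ∃ dv : Fin dK → ℝ,
      C i = U * Matrix.diagonal (fun j => (dv j : ℂ)) * star U)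
    (hA : ∀ i, (A i).IsHermitian)
    (p : Fin ℓ → ℝ) (hp : ∀ i, 0 ≤ p i) (hp1 : ∑ i, p i = 1)
    (h₁ : (∑ i, p i • (C i ⊗ₖ matDown (hA i))).IsHermitian)
    (h₂ : (∑ i, p i • (C i ⊗ₖ A i)).IsHermitian) :
    Majorizes h₁.eigenvalues h₂.eigenvalues :=
  alignment_with_commuting_factor_general C A hC hdiag hA p hp h₁ h₂
end

section
/- Let (ρ_I)_{I ⊆ [n]} be a tuple of d^{|I|}-dimensional quantum states, Q a qudit state with maximal eigenvector |q_1⟩, and μ a probability measure on subsets of [n]. Then the largest eigenvalue λ_1 of the alignment operator Σ_{I ⊆ [n]} μ_I ρ_I ⊗ Q^{⊗I^c} is at most Σ_{I ⊆ [n]} μ_I λ_1(Q)^{|I^c|}, with equality achieved by the tuple (|q_1⟩⟨q_1|^{⊗I})_{I ⊆ [n]}. -/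
open Finset Matrix
open scoped Kronecker ComplexOrder

/-- The outer product `|v⟩⟨v|`. -/
noncomputable def outer {m : Type*} (v : m → ℂ) : Matrix m m ℂ :=
  Matrix.of fun x y => v x * star (v y)

/-- `ρ_I ⊗ Q^{⊗ I^c}` as an operator on `n` qudits of local dimension `d`. -/
noncomputable def embed {n d : ℕ} (I : Finset (Fin n))
    (ρ : Matrix (↥I → Fin d) (↥I → Fin d) ℂ) (Q : Matrix (Fin d) (Fin d) ℂ) :
    Matrix (Fin n → Fin d) (Fin n → Fin d) ℂ :=
  Matrix.of fun x y =>
    ρ (fun i => x i.1) (fun i => y i.1) * ∏ j ∈ Iᶜ, Q (x j) (y j)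

/-- The alignment operator `Σ_{I ⊆ [n]} μ_I ρ_I ⊗ Q^{⊗ I^c}`. -/
noncomputable def alignOp {n d : ℕ} (μ : Finset (Fin n) → ℝ)
    (ρ : (I : Finset (Fin n)) → Matrix (↥I → Fin d) (↥I → Fin d) ℂ)
    (Q : Matrix (Fin d) (Fin d) ℂ) :
    Matrix (Fin n → Fin d) (Fin n → Fin d) ℂ :=
  ∑ I : Finset (Fin n), μ I • embed I (ρ I) Q

/-- `|v⟩^{⊗ I}` as a vector on the qudits in `I`. -/
noncomputable def prodVec {n d : ℕ} (I : Finset (Fin n)) (v : Fin d → ℂ) :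
    (↥I → Fin d) → ℂ :=
  fun x => ∏ i, v (x i)

/-- A quantum state: positive semi-definite with unit trace. -/
def IsState {m : Type*} [Fintype m] [DecidableEq m] (M : Matrix m m ℂ) : Prop :=
  M.PosSemidef ∧ M.trace = 1

/-- `q` is an orthonormal family of vectors. -/
def OrthonormalFam {d : ℕ} (q : Fin d → Fin d → ℂ) : Prop :=
  ∀ i j, (∑ k, star (q i k) * q j k) = if i = j then (1 : ℂ) else 0

/-- The largest eigenvalue of a Hermitian matrix. -/
noncomputable def maxEig {m : Type*} [Fintype m] [DecidableEq m] {M : Matrix m m ℂ}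
    (hM : M.IsHermitian) : ℝ := ⨆ i, hM.eigenvalues i


namespace AlignAux

/-! ### Rayleigh quotient machinery -/

section Rayleigh
variable {m : Type*} [Fintype m] [DecidableEq m] {M : Matrix m m ℂ}

lemma rayleigh_eq (hM : M.IsHermitian) (v : m → ℂ) :
    star v ⬝ᵥ M *ᵥ v = ∑ i, (hM.eigenvalues i : ℂ) *
      (‖(star (hM.eigenvectorUnitary : Matrix m m ℂ) *ᵥ v) i‖ : ℂ) ^ 2 := by
  have hsw : star v ᵥ* (hM.eigenvectorUnitary : Matrix m m ℂ)
      = star (star (hM.eigenvectorUnitary : Matrix m m ℂ) *ᵥ v) := by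
    rw [star_mulVec, star_eq_conjTranspose, conjTranspose_conjTranspose]
  conv_lhs => rw [hM.spectral_theorem, Unitary.conjStarAlgAut_apply]
  rw [← mulVec_mulVec, ← mulVec_mulVec, dotProduct_mulVec, hsw]
  simp only [dotProduct, mulVec_diagonal, Function.comp_apply, Pi.star_apply, RCLike.star_def]
  refine Finset.sum_congr rfl fun i _ => ?_
  rw [mul_left_comm, RCLike.conj_mul]
  norm_cast

lemma parseval_eq (hM : M.IsHermitian) (v : m → ℂ) :
    star v ⬝ᵥ v = ∑ i, ((‖(star (hM.eigenvectorUnitary : Matrix m m ℂ) *ᵥ v) i‖ : ℂ)) ^ 2 := by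
  have hsw : star v ᵥ* (hM.eigenvectorUnitary : Matrix m m ℂ)
      = star (star (hM.eigenvectorUnitary : Matrix m m ℂ) *ᵥ v) := by
    rw [star_mulVec, star_eq_conjTranspose, conjTranspose_conjTranspose]
  have h1 : star (star (hM.eigenvectorUnitary : Matrix m m ℂ) *ᵥ v)
      ⬝ᵥ (star (hM.eigenvectorUnitary : Matrix m m ℂ) *ᵥ v) = star v ⬝ᵥ v := by
    rw [← hsw, ← dotProduct_mulVec, mulVec_mulVec,
      (Matrix.mem_unitaryGroup_iff).mp hM.eigenvectorUnitary.2, one_mulVec]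
  rw [← h1]
  simp only [dotProduct, Pi.star_apply, RCLike.star_def]
  refine Finset.sum_congr rfl fun i _ => ?_
  rw [show (star (hM.eigenvectorUnitary : Matrix m m ℂ) *ᵥ v) i
      = (star (hM.eigenvectorUnitary : Matrix m m ℂ) *ᵥ v) i from rfl]
  exact RCLike.conj_mul _

lemma rayleigh_re (hM : M.IsHermitian) (v : m → ℂ) :
    (star v ⬝ᵥ M *ᵥ v).re
      = ∑ i, hM.eigenvalues i * ‖(star (hM.eigenvectorUnitary : Matrix m m ℂ) *ᵥ v) i‖ ^ 2 := by
  rw [rayleigh_eq hM v, show (∑ i, (hM.eigenvalues i : ℂ) *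
      (‖(star (hM.eigenvectorUnitary : Matrix m m ℂ) *ᵥ v) i‖ : ℂ) ^ 2)
    = ((∑ i, hM.eigenvalues i * ‖(star (hM.eigenvectorUnitary : Matrix m m ℂ) *ᵥ v) i‖ ^ 2 : ℝ) : ℂ)
      by push_cast; exact Finset.sum_congr rfl fun i _ => by norm_cast, Complex.ofReal_re]

lemma parseval_re (hM : M.IsHermitian) (v : m → ℂ) :
    (star v ⬝ᵥ v).re
      = ∑ i, ‖(star (hM.eigenvectorUnitary : Matrix m m ℂ) *ᵥ v) i‖ ^ 2 := by
  rw [parseval_eq hM v, show (∑ i, ((‖(star (hM.eigenvectorUnitary : Matrix m m ℂ) *ᵥ v) i‖ : ℂ)) ^ 2)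
    = ((∑ i, ‖(star (hM.eigenvectorUnitary : Matrix m m ℂ) *ᵥ v) i‖ ^ 2 : ℝ) : ℂ)
      by push_cast; exact Finset.sum_congr rfl fun i _ => by norm_cast, Complex.ofReal_re]

lemma rayleigh_le_of_eig_le (hM : M.IsHermitian) {c : ℝ} (hc : ∀ i, hM.eigenvalues i ≤ c)
    (v : m → ℂ) : (star v ⬝ᵥ M *ᵥ v).re ≤ c * (star v ⬝ᵥ v).re := by
  rw [rayleigh_re hM v, parseval_re hM v, Finset.mul_sum]
  exact Finset.sum_le_sum fun i _ =>
    mul_le_mul_of_nonneg_right (hc i) (by positivity)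

lemma rayleigh_le_maxEig (hM : M.IsHermitian) (v : m → ℂ) [Nonempty m] :
    (star v ⬝ᵥ M *ᵥ v).re ≤ maxEig hM * (star v ⬝ᵥ v).re :=
  rayleigh_le_of_eig_le hM
    (fun i => le_ciSup (Set.Finite.bddAbove (Set.finite_range _)) i) v

lemma dot_self_eq (v : m → ℂ) : star v ⬝ᵥ v = ((∑ i, ‖v i‖ ^ 2 : ℝ) : ℂ) := by
  simp only [dotProduct, Pi.star_apply, RCLike.star_def, RCLike.conj_mul]
  push_cast
  exact Finset.sum_congr rfl fun i _ => by norm_cast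

lemma dot_self_re (v : m → ℂ) : (star v ⬝ᵥ v).re = ∑ i, ‖v i‖ ^ 2 := by
  rw [dot_self_eq, Complex.ofReal_re]

lemma maxEig_le_of_rayleigh [Nonempty m] (hM : M.IsHermitian) (c : ℝ)
    (h : ∀ v : m → ℂ, (star v ⬝ᵥ M *ᵥ v).re ≤ c * (star v ⬝ᵥ v).re) :
    maxEig hM ≤ c := by
  refine ciSup_le fun i => ?_
  have h1 := hM.eigenvalues_eq i
  have h2 : (star (⇑(hM.eigenvectorBasis i)) ⬝ᵥ ⇑(hM.eigenvectorBasis i)) = 1 := by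
    rw [dotProduct_comm, ← EuclideanSpace.inner_eq_star_dotProduct]
    have := hM.eigenvectorBasis.orthonormal.1 i
    rw [@inner_self_eq_norm_sq_to_K ℂ, this]
    norm_num
  calc hM.eigenvalues i = (star (⇑(hM.eigenvectorBasis i)) ⬝ᵥ
        (M *ᵥ ⇑(hM.eigenvectorBasis i))).re := h1
    _ ≤ c * (star (⇑(hM.eigenvectorBasis i)) ⬝ᵥ ⇑(hM.eigenvectorBasis i)).re := h _
    _ = c := by rw [h2]; simp

lemma eig_le_maxEig [Nonempty m] (hM : M.IsHermitian) {c : ℝ} {v : m → ℂ}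
    (hv : (star v ⬝ᵥ v).re = 1) (heig : M *ᵥ v = (c : ℂ) • v) : c ≤ maxEig hM := by
  have h1 : (star v ⬝ᵥ M *ᵥ v).re = c := by
    rw [heig, dotProduct_smul, smul_eq_mul, dot_self_eq]
    have h2 : (∑ i, ‖v i‖ ^ 2 : ℝ) = 1 := by rw [← dot_self_re, hv]
    rw [h2]
    norm_num
  have := rayleigh_le_maxEig hM v
  rw [h1, hv, mul_one] at this
  exact this
end Rayleigh

/-! ### State facts -/

section StateFacts
variable {m : Type*} [Fintype m] [DecidableEq m] {ρ : Matrix m m ℂ}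

lemma sum_eigenvalues_eq_one (h : ρ.PosSemidef) (ht : ρ.trace = 1) :
    ∑ i, h.1.eigenvalues i = 1 := by
  have h2 : ρ.trace = ∑ i, (h.1.eigenvalues i : ℂ) := by
    conv_lhs => rw [h.1.spectral_theorem, Unitary.conjStarAlgAut_apply]
    rw [Matrix.trace_mul_cycle, Matrix.mem_unitaryGroup_iff'.mp h.1.eigenvectorUnitary.2,
      one_mul, Matrix.trace_diagonal]
    simp
  rw [ht] at h2
  exact_mod_cast h2.symm

lemma state_rayleigh_le (h : IsState ρ) (w : m → ℂ) :
    (star w ⬝ᵥ ρ *ᵥ w).re ≤ (star w ⬝ᵥ w).re := by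
  have h1 : ∀ i, h.1.isHermitian.eigenvalues i ≤ 1 := by
    intro i
    rw [← sum_eigenvalues_eq_one h.1 h.2]
    exact Finset.single_le_sum (f := h.1.isHermitian.eigenvalues)
      (fun j _ => h.1.eigenvalues_nonneg j) (Finset.mem_univ i)
  simpa using rayleigh_le_of_eig_le h.1.isHermitian h1 w

lemma state_rayleigh_nonneg (h : ρ.PosSemidef) (w : m → ℂ) :
    0 ≤ (star w ⬝ᵥ ρ *ᵥ w).re := by
  rw [rayleigh_re h.isHermitian w]
  exact Finset.sum_nonneg fun i _ => mul_nonneg (h.eigenvalues_nonneg i) (by positivity)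
end StateFacts

/-! ### Orthonormal family facts -/

section Fam
variable {d : ℕ}

lemma complete_fam {q : Fin d → Fin d → ℂ} (hq : OrthonormalFam q) (a b : Fin d) :
    ∑ i, q i a * star (q i b) = if a = b then (1 : ℂ) else 0 := by
  classical
  set M : Matrix (Fin d) (Fin d) ℂ := Matrix.of (fun i k => q i k) with hM
  have h1 : M * Mᴴ = 1 := by
    ext i j
    simp only [Matrix.mul_apply, conjTranspose_apply, hM, Matrix.of_apply, Matrix.one_apply]
    calc ∑ k, q i k * star (q j k) = star (∑ k, star (q i k) * q j k) := by
          rw [star_sum]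
          exact Finset.sum_congr rfl fun k _ => by
            rw [StarMul.star_mul, star_star, mul_comm]
      _ = _ := by rw [hq i j]; split <;> simp
  have h2 : Mᴴ * M = 1 := mul_eq_one_comm.1 h1
  have h3 := congrFun (congrFun h2 a) b
  simp only [Matrix.mul_apply, conjTranspose_apply, hM, Matrix.of_apply, Matrix.one_apply] at h3
  calc ∑ i, q i a * star (q i b) = star (∑ i, star (q i a) * q i b) := by
        rw [star_sum]
        exact Finset.sum_congr rfl fun k _ => by
          rw [StarMul.star_mul, star_star, mul_comm]
    _ = _ := by rw [h3]; split <;> simp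

lemma Q_apply {q : Fin d → Fin d → ℂ} {lam : Fin d → ℝ} {Q : Matrix (Fin d) (Fin d) ℂ}
    (hQ : Q = ∑ i, (lam i : ℂ) • outer (q i)) (a b : Fin d) :
    Q a b = ∑ i, (lam i : ℂ) * (q i a * star (q i b)) := by
  rw [hQ]
  simp [outer, Matrix.sum_apply]

lemma Q_mulVec_q0 [NeZero d] {q : Fin d → Fin d → ℂ} (hq : OrthonormalFam q)
    {lam : Fin d → ℝ} {Q : Matrix (Fin d) (Fin d) ℂ}
    (hQ : Q = ∑ i, (lam i : ℂ) • outer (q i)) (a : Fin d) :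
    ∑ b, Q a b * q 0 b = (lam 0 : ℂ) * q 0 a := by
  simp only [Q_apply hQ, Finset.sum_mul]
  rw [Finset.sum_comm]
  have : ∀ i : Fin d, ∑ b, (lam i : ℂ) * (q i a * star (q i b)) * q 0 b
      = (lam i : ℂ) * q i a * (if i = 0 then 1 else 0) := by
    intro i
    rw [← hq i 0, Finset.mul_sum]
    exact Finset.sum_congr rfl fun b _ => by ring
  rw [Finset.sum_congr rfl fun i _ => this i]
  simp
end Fam

/-! ### Splitting `Fin n → Fin d` along a subset -/

variable {n d : ℕ}

def glue (I : Finset (Fin n)) (s : ↥I → Fin d) (t : ↥(Iᶜ) → Fin d) : Fin n → Fin d :=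
  fun j => if h : j ∈ I then s ⟨j, h⟩ else t ⟨j, Finset.mem_compl.2 h⟩

lemma glue_mem {I : Finset (Fin n)} (s : ↥I → Fin d) (t : ↥(Iᶜ) → Fin d) (i : ↥I) :
    glue I s t i.1 = s i := by
  simp [glue, i.2]

lemma glue_not_mem {I : Finset (Fin n)} (s : ↥I → Fin d) (t : ↥(Iᶜ) → Fin d) (j : ↥(Iᶜ)) :
    glue I s t j.1 = t j := by
  have hj : j.1 ∉ I := Finset.mem_compl.1 j.2
  simp [glue, hj]

def splitEquiv (I : Finset (Fin n)) : (Fin n → Fin d) ≃ (↥I → Fin d) × (↥(Iᶜ) → Fin d) where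
  toFun x := (fun i => x i.1, fun j => x j.1)
  invFun p := glue I p.1 p.2
  left_inv x := by
    funext j
    by_cases h : j ∈ I <;> simp [glue, h]
  right_inv p := by
    refine Prod.ext (funext fun i => glue_mem _ _ i) (funext fun j => glue_not_mem _ _ j)

lemma sum_split {β : Type*} [AddCommMonoid β] (I : Finset (Fin n)) (f : (Fin n → Fin d) → β) :
    ∑ x : Fin n → Fin d, f x = ∑ s : ↥I → Fin d, ∑ t : ↥(Iᶜ) → Fin d, f (glue I s t) := by
  have h := Fintype.sum_equiv (splitEquiv I) f (fun p => f (glue I p.1 p.2)) (fun x => ?_)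
  · rw [h, Fintype.sum_prod_type]
  · have : glue I (fun i => x i.1) (fun j => x j.1) = x := (splitEquiv I).left_inv x
    rw [show (splitEquiv I x) = (fun (i : ↥I) => x i.1, fun (j : ↥(Iᶜ)) => x j.1) from rfl]
    exact congrArg f this.symm

lemma prod_compl_eq_attach {β : Type*} [CommMonoid β] (I : Finset (Fin n)) (g : Fin n → β) :
    ∏ j ∈ Iᶜ, g j = ∏ j : ↥(Iᶜ), g j.1 := by
  rw [← Finset.prod_attach]
  rfl

lemma sum_comm5 {α β γ δ ε M : Type*} [Fintype α] [Fintype β] [Fintype γ] [Fintype δ]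
    [Fintype ε] [AddCommMonoid M] (g : α → β → γ → δ → ε → M) :
    ∑ f : α, ∑ s : β, ∑ t : γ, ∑ s' : δ, ∑ t' : ε, g f s t s' t'
      = ∑ s, ∑ t, ∑ s', ∑ t', ∑ f, g f s t s' t' := by
  rw [Finset.sum_comm]
  refine Finset.sum_congr rfl fun s _ => ?_
  rw [Finset.sum_comm]
  refine Finset.sum_congr rfl fun t _ => ?_
  rw [Finset.sum_comm]
  refine Finset.sum_congr rfl fun s' _ => ?_
  rw [Finset.sum_comm]

lemma sum_comm4 {α β γ δ M : Type*} [Fintype α] [Fintype β] [Fintype γ] [Fintype δ]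
    [AddCommMonoid M] (g : α → β → γ → δ → M) :
    ∑ f : α, ∑ s : β, ∑ t : γ, ∑ t' : δ, g f s t t'
      = ∑ s, ∑ t, ∑ t', ∑ f, g f s t t' := by
  rw [Finset.sum_comm]
  refine Finset.sum_congr rfl fun s _ => ?_
  rw [Finset.sum_comm]
  refine Finset.sum_congr rfl fun t _ => ?_
  rw [Finset.sum_comm]

/-! ### The quadratic form decomposition -/

noncomputable def Wvec (q : Fin d → Fin d → ℂ) (I : Finset (Fin n))
    (v : (Fin n → Fin d) → ℂ) (f : ↥(Iᶜ) → Fin d) : (↥I → Fin d) → ℂ :=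
  fun s => ∑ t : ↥(Iᶜ) → Fin d, (∏ j, star (q (f j) (t j))) * v (glue I s t)

section Decomp
variable {q : Fin d → Fin d → ℂ} {lam : Fin d → ℝ} {Q : Matrix (Fin d) (Fin d) ℂ}

noncomputable def Tterm (q : Fin d → Fin d → ℂ) (lam : Fin d → ℝ) (I : Finset (Fin n))
    (ρ : Matrix (↥I → Fin d) (↥I → Fin d) ℂ) (v : (Fin n → Fin d) → ℂ)
    (s : ↥I → Fin d) (t : ↥(Iᶜ) → Fin d) (s' : ↥I → Fin d) (t' : ↥(Iᶜ) → Fin d)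
    (f : ↥(Iᶜ) → Fin d) : ℂ :=
  (∏ j, (lam (f j) : ℂ)) * (star (v (glue I s t)) * ((∏ j, q (f j) (t j)) *
    (ρ s s' * ((∏ j, star (q (f j) (t' j))) * v (glue I s' t')))))

lemma lhs_eq (hQ : Q = ∑ i, (lam i : ℂ) • outer (q i)) (I : Finset (Fin n))
    (ρ : Matrix (↥I → Fin d) (↥I → Fin d) ℂ)
    (v : (Fin n → Fin d) → ℂ) :
    star v ⬝ᵥ (embed I ρ Q *ᵥ v)
      = ∑ s, ∑ t, ∑ s', ∑ t', ∑ f, Tterm q lam I ρ v s t s' t' f := by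
  simp only [dotProduct, mulVec, embed, Matrix.of_apply, Finset.mul_sum, Pi.star_apply]
  rw [sum_split I]
  refine Finset.sum_congr rfl fun s _ => Finset.sum_congr rfl fun t _ => ?_
  rw [sum_split I]
  refine Finset.sum_congr rfl fun s' _ => Finset.sum_congr rfl fun t' _ => ?_
  have h1 : (fun i : ↥I => glue I s t i.1) = s := funext (glue_mem s t)
  have h2 : (fun i : ↥I => glue I s' t' i.1) = s' := funext (glue_mem s' t')
  have h3 : ∏ j ∈ Iᶜ, Q (glue I s t j) (glue I s' t' j) = ∑ f : ↥(Iᶜ) → Fin d,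
      ∏ j, ((lam (f j) : ℂ) * (q (f j) (t j) * star (q (f j) (t' j)))) := by
    rw [prod_compl_eq_attach]
    rw [Finset.prod_congr rfl fun j _ => by
      rw [glue_not_mem s t j, glue_not_mem s' t' j, Q_apply hQ]]
    exact Fintype.prod_sum _
  rw [h1, h2, h3, Finset.mul_sum, Finset.sum_mul, Finset.mul_sum]
  refine Finset.sum_congr rfl fun f _ => ?_
  rw [Tterm]
  rw [Finset.prod_mul_distrib, Finset.prod_mul_distrib]
  ring

lemma star_Wvec (q : Fin d → Fin d → ℂ) (I : Finset (Fin n)) (v : (Fin n → Fin d) → ℂ)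
    (f : ↥(Iᶜ) → Fin d) (s : ↥I → Fin d) :
    star (Wvec q I v f) s
      = ∑ t : ↥(Iᶜ) → Fin d, (∏ j, q (f j) (t j)) * star (v (glue I s t)) := by
  simp only [Pi.star_apply, Wvec, star_sum]
  refine Finset.sum_congr rfl fun t _ => ?_
  rw [StarMul.star_mul, mul_comm]
  congr 1
  rw [star_prod]
  exact Finset.prod_congr rfl fun j _ => star_star _

lemma rhs_eq (I : Finset (Fin n)) (ρ : Matrix (↥I → Fin d) (↥I → Fin d) ℂ)
    (v : (Fin n → Fin d) → ℂ) (f : ↥(Iᶜ) → Fin d) :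
    (∏ j, (lam (f j) : ℂ)) * (star (Wvec q I v f) ⬝ᵥ ρ *ᵥ Wvec q I v f)
      = ∑ s, ∑ t, ∑ s', ∑ t', Tterm q lam I ρ v s t s' t' f := by
  simp only [dotProduct, mulVec, star_Wvec, Wvec]
  rw [Finset.mul_sum]
  refine Finset.sum_congr rfl fun s _ => ?_
  rw [Finset.sum_mul, Finset.mul_sum]
  refine Finset.sum_congr rfl fun t _ => ?_
  rw [Finset.mul_sum, Finset.mul_sum]
  refine Finset.sum_congr rfl fun s' _ => ?_
  rw [Finset.mul_sum, Finset.mul_sum, Finset.mul_sum]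
  refine Finset.sum_congr rfl fun t' _ => ?_
  simp only [Tterm]
  ring

lemma quad_decomp (hQ : Q = ∑ i, (lam i : ℂ) • outer (q i)) (I : Finset (Fin n))
    (ρ : Matrix (↥I → Fin d) (↥I → Fin d) ℂ) (v : (Fin n → Fin d) → ℂ) :
    star v ⬝ᵥ (embed I ρ Q *ᵥ v)
      = ∑ f : ↥(Iᶜ) → Fin d,
        (∏ j, (lam (f j) : ℂ)) * (star (Wvec q I v f) ⬝ᵥ ρ *ᵥ Wvec q I v f) := by
  calc star v ⬝ᵥ (embed I ρ Q *ᵥ v)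
      = ∑ s, ∑ t, ∑ s', ∑ t', ∑ f, Tterm q lam I ρ v s t s' t' f := lhs_eq hQ I ρ v
    _ = ∑ f, ∑ s, ∑ t, ∑ s', ∑ t', Tterm q lam I ρ v s t s' t' f := (sum_comm5 _).symm
    _ = _ := Finset.sum_congr rfl fun f _ => (rhs_eq I ρ v f).symm

lemma parseval_W {q : Fin d → Fin d → ℂ} (hq : OrthonormalFam q) (I : Finset (Fin n))
    (v : (Fin n → Fin d) → ℂ) :
    ∑ f : ↥(Iᶜ) → Fin d, star (Wvec q I v f) ⬝ᵥ Wvec q I v f = star v ⬝ᵥ v := by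
  have h1 : ∀ f : ↥(Iᶜ) → Fin d, star (Wvec q I v f) ⬝ᵥ Wvec q I v f
      = ∑ s, ∑ t, ∑ t' : ↥(Iᶜ) → Fin d,
          (∏ j, q (f j) (t j) * star (q (f j) (t' j)))
            * (star (v (glue I s t)) * v (glue I s t')) := by
    intro f
    simp only [dotProduct, star_Wvec, Wvec]
    refine Finset.sum_congr rfl fun s _ => ?_
    rw [Finset.sum_mul]
    refine Finset.sum_congr rfl fun t _ => ?_
    rw [Finset.mul_sum]
    refine Finset.sum_congr rfl fun t' _ => ?_
    rw [Finset.prod_mul_distrib]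
    ring
  rw [Finset.sum_congr rfl fun f _ => h1 f, sum_comm4]
  have h2 : ∀ t t' : ↥(Iᶜ) → Fin d,
      (∑ f : ↥(Iᶜ) → Fin d, ∏ j, q (f j) (t j) * star (q (f j) (t' j)))
        = if t = t' then (1 : ℂ) else 0 := by
    intro t t'
    rw [← Fintype.prod_sum fun j i => q i (t j) * star (q i (t' j)),
      Finset.prod_congr rfl fun j _ => complete_fam hq (t j) (t' j)]
    by_cases h : t = t'
    · simp [h]
    · obtain ⟨j, hj⟩ := Function.ne_iff.1 h
      rw [if_neg h]
      exact Finset.prod_eq_zero (Finset.mem_univ j) (if_neg hj)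
  have h3 : ∀ (s : ↥I → Fin d) (t : ↥(Iᶜ) → Fin d),
      (∑ t' : ↥(Iᶜ) → Fin d, ∑ f : ↥(Iᶜ) → Fin d,
        (∏ j, q (f j) (t j) * star (q (f j) (t' j)))
          * (star (v (glue I s t)) * v (glue I s t')))
      = star (v (glue I s t)) * v (glue I s t) := by
    intro s t
    have h4 : ∀ t' : ↥(Iᶜ) → Fin d, (∑ f : ↥(Iᶜ) → Fin d,
        (∏ j, q (f j) (t j) * star (q (f j) (t' j)))
          * (star (v (glue I s t)) * v (glue I s t')))
        = (if t = t' then (1:ℂ) else 0) * (star (v (glue I s t)) * v (glue I s t')) := by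
      intro t'
      rw [← Finset.sum_mul, h2]
    rw [Finset.sum_congr rfl fun t' _ => h4 t']
    simp
  rw [Finset.sum_congr rfl fun s _ => Finset.sum_congr rfl fun t _ => h3 s t]
  rw [show star v ⬝ᵥ v = ∑ x : Fin n → Fin d, star (v x) * v x from rfl, sum_split I]
end Decomp


/-! ### The inequality for one `embed` term -/

lemma prod_attach' {β : Type*} [CommMonoid β] (J : Finset (Fin n)) (g : Fin n → β) :
    ∏ j ∈ J, g j = ∏ j : ↥J, g j.1 := by
  rw [← Finset.prod_attach]
  rfl

section Bound
variable [NeZero d] {q : Fin d → Fin d → ℂ} {lam : Fin d → ℝ} {Q : Matrix (Fin d) (Fin d) ℂ}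

lemma embed_rayleigh_le (hq : OrthonormalFam q)
    (hlam : Antitone lam) (hlam0 : ∀ i, 0 ≤ lam i)
    (hQ : Q = ∑ i, (lam i : ℂ) • outer (q i))
    (I : Finset (Fin n)) {ρ : Matrix (↥I → Fin d) (↥I → Fin d) ℂ} (hρ : IsState ρ)
    (v : (Fin n → Fin d) → ℂ) :
    (star v ⬝ᵥ (embed I ρ Q *ᵥ v)).re ≤ lam 0 ^ (Iᶜ.card) * (star v ⬝ᵥ v).re := by
  rw [quad_decomp hQ I ρ v, Complex.re_sum]
  have hterm : ∀ f : ↥(Iᶜ) → Fin d,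
      ((∏ j, (lam (f j) : ℂ)) * (star (Wvec q I v f) ⬝ᵥ ρ *ᵥ Wvec q I v f)).re
        ≤ lam 0 ^ (Iᶜ.card) * (star (Wvec q I v f) ⬝ᵥ Wvec q I v f).re := by
    intro f
    have hcast : (∏ j, (lam (f j) : ℂ)) = ((∏ j, lam (f j) : ℝ) : ℂ) := by push_cast; rfl
    rw [hcast, Complex.re_ofReal_mul]
    have hR0 := state_rayleigh_nonneg hρ.1 (Wvec q I v f)
    have hRle := state_rayleigh_le hρ (Wvec q I v f)
    have hprod : (∏ j, lam (f j)) ≤ lam 0 ^ (Iᶜ.card) := by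
      calc (∏ j : ↥(Iᶜ), lam (f j)) ≤ ∏ _j : ↥(Iᶜ), lam 0 :=
            Finset.prod_le_prod (fun j _ => hlam0 _) (fun j _ => hlam (Fin.zero_le _))
        _ = lam 0 ^ (Iᶜ.card) := by
            rw [Finset.prod_const, Finset.card_univ, Fintype.card_coe]
    calc (∏ j, lam (f j)) * (star (Wvec q I v f) ⬝ᵥ ρ *ᵥ Wvec q I v f).re
        ≤ lam 0 ^ (Iᶜ.card) * (star (Wvec q I v f) ⬝ᵥ ρ *ᵥ Wvec q I v f).re :=
          mul_le_mul_of_nonneg_right hprod hR0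
      _ ≤ _ := mul_le_mul_of_nonneg_left hRle (pow_nonneg (hlam0 0) _)
  calc (∑ f : ↥(Iᶜ) → Fin d,
        ((∏ j, (lam (f j) : ℂ)) * (star (Wvec q I v f) ⬝ᵥ ρ *ᵥ Wvec q I v f)).re)
      ≤ ∑ f : ↥(Iᶜ) → Fin d,
          lam 0 ^ (Iᶜ.card) * (star (Wvec q I v f) ⬝ᵥ Wvec q I v f).re :=
        Finset.sum_le_sum fun f _ => hterm f
    _ = lam 0 ^ (Iᶜ.card)
        * (∑ f : ↥(Iᶜ) → Fin d, star (Wvec q I v f) ⬝ᵥ Wvec q I v f).re := by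
        rw [Complex.re_sum, Finset.mul_sum]
    _ = _ := by rw [parseval_W hq I v]

lemma sum_mulVec' {ι m : Type*} [Fintype ι] [Fintype m] (M : ι → Matrix m m ℂ) (v : m → ℂ) :
    (∑ i, M i) *ᵥ v = ∑ i, (M i) *ᵥ v := by
  funext x
  simp only [mulVec, dotProduct, Matrix.sum_apply, Finset.sum_apply, Finset.sum_mul]
  rw [Finset.sum_comm]

lemma dotProduct_sum' {ι m : Type*} [Fintype ι] [Fintype m] (u : m → ℂ) (w : ι → m → ℂ) :
    u ⬝ᵥ (∑ i, w i) = ∑ i, u ⬝ᵥ w i := by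
  simp only [dotProduct, Finset.sum_apply, Finset.mul_sum]
  rw [Finset.sum_comm]

lemma align_rayleigh_le (hq : OrthonormalFam q)
    (hlam : Antitone lam) (hlam0 : ∀ i, 0 ≤ lam i)
    (hQ : Q = ∑ i, (lam i : ℂ) • outer (q i))
    (μ : Finset (Fin n) → ℝ) (hμ0 : ∀ I, 0 ≤ μ I)
    (ρ : (I : Finset (Fin n)) → Matrix (↥I → Fin d) (↥I → Fin d) ℂ)
    (hρ : ∀ I, IsState (ρ I)) (v : (Fin n → Fin d) → ℂ) :
    (star v ⬝ᵥ (alignOp μ ρ Q *ᵥ v)).re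
      ≤ (∑ I : Finset (Fin n), μ I * lam 0 ^ (Iᶜ.card)) * (star v ⬝ᵥ v).re := by
  rw [alignOp, sum_mulVec', dotProduct_sum', Complex.re_sum]
  have hterm : ∀ I : Finset (Fin n),
      (star v ⬝ᵥ ((μ I • embed I (ρ I) Q) *ᵥ v)).re
        ≤ μ I * (lam 0 ^ (Iᶜ.card) * (star v ⬝ᵥ v).re) := by
    intro I
    rw [smul_mulVec, dotProduct_smul, Complex.real_smul, Complex.re_ofReal_mul]
    exact mul_le_mul_of_nonneg_left (embed_rayleigh_le hq hlam hlam0 hQ I (hρ I) v) (hμ0 I)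
  calc (∑ I : Finset (Fin n), (star v ⬝ᵥ ((μ I • embed I (ρ I) Q) *ᵥ v)).re)
      ≤ ∑ I : Finset (Fin n), μ I * (lam 0 ^ (Iᶜ.card) * (star v ⬝ᵥ v).re) :=
        Finset.sum_le_sum fun I _ => hterm I
    _ = _ := by
        rw [Finset.sum_mul]
        exact Finset.sum_congr rfl fun I _ => by ring

/-! ### The eigenvector for the aligned tuple -/

noncomputable def v0 (n : ℕ) (q : Fin d → Fin d → ℂ) : (Fin n → Fin d) → ℂ :=
  fun x => ∏ i, q 0 (x i)

lemma sum_prod_one {κ : Type*} [Fintype κ] [DecidableEq κ] {g : Fin d → ℂ} (hg : ∑ a, g a = 1) :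
    ∑ s : κ → Fin d, ∏ i, g (s i) = 1 := by
  rw [← Fintype.prod_sum (fun (_i : κ) (a : Fin d) => g a)]
  simp [hg]

lemma hq00 (hq : OrthonormalFam q) : ∑ a, star (q 0 a) * q 0 a = 1 := by
  simpa using hq 0 0

lemma hq00' (hq : OrthonormalFam q) : ∑ a, q 0 a * star (q 0 a) = 1 := by
  rw [← hq00 hq]
  exact Finset.sum_congr rfl fun a _ => mul_comm _ _

lemma v0_norm (hq : OrthonormalFam q) : (star (v0 n q) ⬝ᵥ v0 n q).re = 1 := by
  have h : star (v0 n q) ⬝ᵥ v0 n q = 1 := by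
    have h1 : star (v0 n q) ⬝ᵥ v0 n q
        = ∑ x : Fin n → Fin d, ∏ i, (star (q 0 (x i)) * q 0 (x i)) := by
      simp only [dotProduct, Pi.star_apply, v0, star_prod, ← Finset.prod_mul_distrib]
    rw [h1]
    exact sum_prod_one (hq00 hq)
  rw [h]
  simp

lemma sum_sum_factor {α β : Type*} [Fintype α] [Fintype β] (A : ℂ) (B : α → ℂ) (C : β → ℂ) :
    ∑ s : α, ∑ t : β, A * (B s * C t) = A * ((∑ s, B s) * (∑ t, C t)) := by
  rw [Finset.sum_mul_sum, Finset.mul_sum]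
  refine Finset.sum_congr rfl fun s _ => ?_
  rw [Finset.mul_sum]

lemma embed_eig (hq : OrthonormalFam q) (hQ : Q = ∑ i, (lam i : ℂ) • outer (q i))
    (I : Finset (Fin n)) :
    embed I (outer (prodVec I (q 0))) Q *ᵥ (v0 n q) = ((lam 0 : ℂ) ^ (Iᶜ.card)) • v0 n q := by
  funext x
  show ∑ y, embed I (outer (prodVec I (q 0))) Q x y * v0 n q y = _
  rw [sum_split I]
  have hterm : ∀ (s : ↥I → Fin d) (t : ↥(Iᶜ) → Fin d),
      embed I (outer (prodVec I (q 0))) Q x (glue I s t) * v0 n q (glue I s t)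
        = (∏ i : ↥I, q 0 (x i.1)) * ((∏ i : ↥I, (star (q 0 (s i)) * q 0 (s i)))
            * (∏ j : ↥(Iᶜ), (Q (x j.1) (t j) * q 0 (t j)))) := by
    intro s t
    have h1 : (fun i : ↥I => glue I s t i.1) = s := funext (glue_mem s t)
    have h2 : ∏ j ∈ Iᶜ, Q (x j) (glue I s t j) = ∏ j : ↥(Iᶜ), Q (x j.1) (t j) := by
      rw [prod_attach' (Iᶜ)]
      exact Finset.prod_congr rfl fun j _ => by rw [glue_not_mem]
    have h3 : v0 n q (glue I s t) = (∏ i : ↥I, q 0 (s i)) * ∏ j : ↥(Iᶜ), q 0 (t j) := by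
      rw [v0, ← Finset.prod_mul_prod_compl I, prod_attach' I, prod_attach' (Iᶜ)]
      congr 1
      · exact Finset.prod_congr rfl fun i _ => by rw [glue_mem]
      · exact Finset.prod_congr rfl fun j _ => by rw [glue_not_mem]
    rw [embed]
    simp only [Matrix.of_apply]
    rw [h1, h2, h3, outer]
    simp only [Matrix.of_apply, prodVec, star_prod]
    rw [Finset.prod_mul_distrib, Finset.prod_mul_distrib]
    ring
  rw [Finset.sum_congr rfl fun s _ => Finset.sum_congr rfl fun t _ => hterm s t,
    sum_sum_factor]
  have hB : (∑ s : ↥I → Fin d, ∏ i, (star (q 0 (s i)) * q 0 (s i))) = 1 :=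
    sum_prod_one (hq00 hq)
  have hC : (∑ t : ↥(Iᶜ) → Fin d, ∏ j, (Q (x j.1) (t j) * q 0 (t j)))
      = (lam 0 : ℂ) ^ (Iᶜ.card) * ∏ j : ↥(Iᶜ), q 0 (x j.1) := by
    rw [← Fintype.prod_sum fun (j : ↥(Iᶜ)) (b : Fin d) => Q (x j.1) b * q 0 b,
      Finset.prod_congr rfl fun j _ => Q_mulVec_q0 hq hQ (x j.1),
      Finset.prod_mul_distrib, Finset.prod_const, Finset.card_univ, Fintype.card_coe]
  rw [hB, hC, Pi.smul_apply, smul_eq_mul, v0,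
    ← Finset.prod_mul_prod_compl I (fun i => q 0 (x i)), prod_attach' I, prod_attach' (Iᶜ)]
  ring

lemma align_eig (hq : OrthonormalFam q) (hQ : Q = ∑ i, (lam i : ℂ) • outer (q i))
    (μ : Finset (Fin n) → ℝ) :
    alignOp μ (fun I => outer (prodVec I (q 0))) Q *ᵥ v0 n q
      = ((∑ I : Finset (Fin n), μ I * lam 0 ^ (Iᶜ.card) : ℝ) : ℂ) • v0 n q := by
  rw [alignOp, sum_mulVec',
    Finset.sum_congr rfl fun I (_ : I ∈ Finset.univ) => by
      rw [smul_mulVec, embed_eig hq hQ I]]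
  funext x
  simp only [Finset.sum_apply, Pi.smul_apply, smul_eq_mul, Complex.real_smul]
  rw [Finset.sum_congr rfl fun I (_ : I ∈ Finset.univ) =>
    (mul_assoc ((μ I : ℂ)) ((lam 0 : ℂ) ^ (Iᶜ.card)) (v0 n q x)).symm, ← Finset.sum_mul]
  congr 1
  push_cast
  rfl

lemma outer_state_prodVec (hq : OrthonormalFam q) (I : Finset (Fin n)) :
    IsState (outer (prodVec I (q 0)) : Matrix (↥I → Fin d) (↥I → Fin d) ℂ) := by
  constructor
  · refine Matrix.PosSemidef.of_dotProduct_mulVec_nonneg ?_ ?_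
    · ext s s'
      simp only [conjTranspose_apply, outer, Matrix.of_apply, StarMul.star_mul, star_star]
    · intro x
      set z : ℂ := ∑ b, star (prodVec I (q 0) b) * x b with hzdef
      have hz : star x ⬝ᵥ (outer (prodVec I (q 0)) *ᵥ x) = star z * z := by
        have hsz : star z = ∑ a, star (x a) * prodVec I (q 0) a := by
          rw [hzdef, star_sum]
          exact Finset.sum_congr rfl fun a _ => by
            rw [StarMul.star_mul, star_star, mul_comm]
        rw [hsz, hzdef, Finset.sum_mul_sum]
        simp only [dotProduct, mulVec, outer, Matrix.of_apply, Pi.star_apply]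
        refine Finset.sum_congr rfl fun a _ => ?_
        rw [Finset.mul_sum]
        exact Finset.sum_congr rfl fun b _ => by ring
      rw [hz]
      exact star_mul_self_nonneg z
  · have h1 : (outer (prodVec I (q 0)) : Matrix (↥I → Fin d) (↥I → Fin d) ℂ).trace
        = ∑ s : ↥I → Fin d, ∏ i, (q 0 (s i) * star (q 0 (s i))) := by
      simp only [Matrix.trace, Matrix.diag, outer, Matrix.of_apply, prodVec, star_prod,
        ← Finset.prod_mul_distrib]
    rw [h1]
    exact sum_prod_one (hq00' hq)
end Bound

end AlignAux

/-- the largest eigenvalue of the alignment operator is at most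
`Σ_I μ_I λ₁(Q)^{|I^c|}`, with equality at the tuple `(|q₁⟩⟨q₁|^{⊗I})_I`. -/
theorem maxEig_alignOp_le {n d : ℕ} [NeZero d]
    (q : Fin d → Fin d → ℂ) (hq : OrthonormalFam q)
    (lam : Fin d → ℝ) (hlam : Antitone lam) (hlam0 : ∀ i, 0 ≤ lam i)
    (hlam1 : ∑ i, lam i = 1)
    (Q : Matrix (Fin d) (Fin d) ℂ) (hQ : Q = ∑ i, (lam i : ℂ) • outer (q i))
    (μ : Finset (Fin n) → ℝ) (hμ0 : ∀ I, 0 ≤ μ I) (hμ1 : ∑ I, μ I = 1)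
    (ρ : (I : Finset (Fin n)) → Matrix (↥I → Fin d) (↥I → Fin d) ℂ)
    (hρ : ∀ I, IsState (ρ I))
    (hH : (alignOp μ ρ Q).IsHermitian)
    (hH' : (alignOp μ (fun I => outer (prodVec I (q 0))) Q).IsHermitian) :
    maxEig hH ≤ (∑ I : Finset (Fin n), μ I * lam 0 ^ (Iᶜ.card)) ∧
      maxEig hH' = ∑ I : Finset (Fin n), μ I * lam 0 ^ (Iᶜ.card) := by
  haveI : Nonempty (Fin d) := ⟨0⟩
  haveI : Nonempty (Fin n → Fin d) := ⟨fun _ => 0⟩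
  have key : ∀ (ρ' : (I : Finset (Fin n)) → Matrix (↥I → Fin d) (↥I → Fin d) ℂ)
      (_ : ∀ I, IsState (ρ' I)) (hH'' : (alignOp μ ρ' Q).IsHermitian),
      maxEig hH'' ≤ ∑ I : Finset (Fin n), μ I * lam 0 ^ (Iᶜ.card) := by
    intro ρ' hρ' hH''
    exact AlignAux.maxEig_le_of_rayleigh hH'' _ fun v =>
      AlignAux.align_rayleigh_le hq hlam hlam0 hQ μ hμ0 ρ' hρ' v
  refine ⟨key ρ hρ hH, le_antisymm (key _ (fun I => AlignAux.outer_state_prodVec hq I) hH') ?_⟩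
  exact AlignAux.eig_le_maxEig hH' (AlignAux.v0_norm hq) (AlignAux.align_eig hq hQ μ)
end

section
/- Fix a continuous, unitarily invariant, convex function f on states of n qudits, and a mixed qudit state Q with spectral decomposition Q = Σ_i λ_i(Q)|q_i⟩⟨q_i| of rank at least 2. Define ε = λ_1(Q) − λ_2(Q) and Q̃ = (1−ε)^{-1}(λ_2(Q)(|q_1⟩⟨q_1| + |q_2⟩⟨q_2|) + Σ_{i≥3} λ_i(Q)|q_i⟩⟨q_i|). If for all probability measures μ̃ on 2^{[n]} the function f(Σ_I μ̃_I ρ_I ⊗ Q̃^{⊗I^c}) is maximized over state tuples at (|q_1⟩⟨q_1|^{⊗I})_I, then for all probability measures μ, f(Σ_I μ_I ρ_I ⊗ Q^{⊗I^c}) is also maximized at (|q_1⟩⟨q_1|^{⊗I})_I. -/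
open Finset Matrix
open scoped Kronecker ComplexOrder

/-! Write `ε = λ₁ - λ₂`, so that `Q = ε |q₁⟩⟨q₁| + (1 - ε) Q̃`. Expanding `Q^{⊗ Iᶜ}` binomially
and grouping the terms by the set `K ⊇ I` of qudits carrying `ρ_I` or `|q₁⟩⟨q₁|` rewrites the
alignment operator of `(μ, ρ, Q)` as the one of `(μ̃, σ, Q̃)`, where
`μ̃_K = Σ_{I ⊆ K} μ_I ε^{|K \ I|} (1 - ε)^{|Kᶜ|}` is again a probability measure and `σ_K` is the
corresponding average of the states `ρ_I ⊗ |q₁⟩⟨q₁|^{⊗ (K \ I)}`. This rewriting sends the tuple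
`(|q₁⟩⟨q₁|^{⊗ I})_I` to itself, so the hypothesis for `μ̃` gives the claim. -/

lemma Finset.prod_add_compl {α R : Type*} [Fintype α] [DecidableEq α] [CommSemiring R]
    (f g : α → R) (I : Finset α) :
    ∏ j ∈ Iᶜ, (f j + g j) = ∑ K with I ⊆ K, (∏ j ∈ K \ I, f j) * ∏ j ∈ Kᶜ, g j := by
  rw [Finset.prod_add]
  refine Finset.sum_nbij' (I ∪ ·) (· \ I) ?_ ?_ ?_ ?_ ?_
  · intro J _
    simp
  · intro K _
    simp [Finset.subset_iff]
  · intro J hJ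
    exact Finset.union_sdiff_cancel_left (Finset.subset_compl_iff_disjoint_left.mp
      (Finset.mem_powerset.mp hJ))
  · intro K hK
    exact Finset.union_sdiff_of_subset (Finset.mem_filter.mp hK).2
  · intro J hJ
    have hIJ : Disjoint I J := Finset.subset_compl_iff_disjoint_left.mp (Finset.mem_powerset.mp hJ)
    rw [Finset.union_sdiff_cancel_left hIJ, Finset.compl_union, Finset.sdiff_eq_inter_compl]

lemma Finset.sum_powerset_comm {α M : Type*} [Fintype α] [DecidableEq α] [AddCommMonoid M]
    (F : Finset α → Finset α → M) :
    ∑ K, ∑ I ∈ K.powerset, F I K = ∑ I, ∑ K with I ⊆ K, F I K :=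
  Finset.sum_comm' (by simp)

section

variable {n d : ℕ}

lemma posSemidef_outer {m : Type*} [Fintype m] (v : m → ℂ) : (outer v).PosSemidef :=
  posSemidef_vecMulVec_self_star v

lemma trace_outer {m : Type*} [Fintype m] (v : m → ℂ) : (outer v).trace = star v ⬝ᵥ v :=
  (trace_vecMulVec v (star v)).trans (dotProduct_comm _ _)

lemma star_prodVec (I : Finset (Fin n)) (v : Fin d → ℂ) :
    star (prodVec I v) = prodVec I (star v) := by
  funext a
  simp [prodVec, star_prod]

lemma prodVec_dotProduct_prodVec (I : Finset (Fin n)) (v w : Fin d → ℂ) :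
    prodVec I v ⬝ᵥ prodVec I w = (v ⬝ᵥ w) ^ I.card := by
  simp only [dotProduct, prodVec, ← Finset.prod_mul_distrib]
  rw [← Fintype.prod_sum (fun (_ : I) x => v x * w x), Finset.prod_const, Finset.card_univ,
    Fintype.card_coe]

lemma isState_outer_prodVec (I : Finset (Fin n)) {v : Fin d → ℂ} (hv : star v ⬝ᵥ v = 1) :
    IsState (outer (prodVec I v)) :=
  ⟨posSemidef_outer _, by rw [trace_outer, star_prodVec, prodVec_dotProduct_prodVec, hv, one_pow]⟩

lemma outer_prodVec_apply_restrict (K : Finset (Fin n)) (v : Fin d → ℂ) (x y : Fin n → Fin d) :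
    outer (prodVec K v) (fun k : K => x k) (fun k : K => y k) =
      ∏ k ∈ K, v (x k) * star (v (y k)) := by
  simp only [outer, of_apply, prodVec, star_prod, ← Finset.prod_mul_distrib]
  exact Finset.prod_coe_sort K fun k => v (x k) * star (v (y k))

lemma embed_smul (K : Finset (Fin n)) (c : ℝ) (ρ : Matrix (K → Fin d) (K → Fin d) ℂ)
    (Q : Matrix (Fin d) (Fin d) ℂ) : embed K (c • ρ) Q = c • embed K ρ Q := by
  ext x y
  simp only [embed, of_apply, Matrix.smul_apply, smul_mul_assoc]

lemma embed_sum {ι : Type*} (s : Finset ι) (K : Finset (Fin n))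
    (ρ : ι → Matrix (K → Fin d) (K → Fin d) ℂ) (Q : Matrix (Fin d) (Fin d) ℂ) :
    embed K (∑ i ∈ s, ρ i) Q = ∑ i ∈ s, embed K (ρ i) Q := by
  ext x y
  simp only [embed, of_apply, Matrix.sum_apply, Finset.sum_mul]

variable [NeZero d]

def padConfig (K : Finset (Fin n)) (a : K → Fin d) (j : Fin n) : Fin d :=
  if h : j ∈ K then a ⟨j, h⟩ else 0

lemma padConfig_coe (K : Finset (Fin n)) (a : K → Fin d) (k : K) : padConfig K a k = a k := by
  simp [padConfig]

lemma restrict_padConfig (K : Finset (Fin n)) (a : K → Fin d) :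
    (fun k : K => padConfig K a k) = a :=
  funext (padConfig_coe K a)

def restrictConfig (I K : Finset (Fin n)) (a : K → Fin d) : I → Fin d :=
  fun i => padConfig K a i

lemma restrictConfig_restrict {I K : Finset (Fin n)} (h : I ⊆ K) (x : Fin n → Fin d) :
    restrictConfig I K (fun k : K => x k) = fun i : I => x i := by
  funext i
  simp [restrictConfig, padConfig, h i.2]

def splitConfig (I K : Finset (Fin n)) (a : K → Fin d) : (I → Fin d) × (↥(K \ I) → Fin d) :=
  (restrictConfig I K a, restrictConfig (K \ I) K a)

lemma splitConfig_bijective {I K : Finset (Fin n)} (h : I ⊆ K) :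
    Function.Bijective (splitConfig (d := d) I K) := by
  refine (Fintype.bijective_iff_injective_and_card _).mpr ⟨fun a b hab => ?_, ?_⟩
  · funext k
    rw [← padConfig_coe K a, ← padConfig_coe K b]
    by_cases hk : (k : Fin n) ∈ I
    · exact congrFun (congrArg Prod.fst hab) ⟨k, hk⟩
    · exact congrFun (congrArg Prod.snd hab) ⟨k, Finset.mem_sdiff.mpr ⟨k.2, hk⟩⟩
  · simp only [Fintype.card_fun, Fintype.card_prod, Fintype.card_coe, Fintype.card_fin]
    rw [← pow_add, add_comm, Finset.card_sdiff_add_card_eq_card h]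

/-- `ρ ⊗ |v⟩⟨v|^{⊗ (K \ I)}` on the qudits in `K`, for `I ⊆ K`. -/
noncomputable def extendByPure (I K : Finset (Fin n)) (ρ : Matrix (I → Fin d) (I → Fin d) ℂ)
    (v : Fin d → ℂ) : Matrix (K → Fin d) (K → Fin d) ℂ :=
  (ρ ⊗ₖ outer (prodVec (K \ I) v)).submatrix (splitConfig I K) (splitConfig I K)

lemma posSemidef_extendByPure (I K : Finset (Fin n)) {ρ : Matrix (I → Fin d) (I → Fin d) ℂ}
    (hρ : ρ.PosSemidef) (v : Fin d → ℂ) : (extendByPure I K ρ v).PosSemidef :=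
  (hρ.kronecker (posSemidef_outer _)).submatrix _

lemma trace_extendByPure {I K : Finset (Fin n)} (h : I ⊆ K) (ρ : Matrix (I → Fin d) (I → Fin d) ℂ)
    {v : Fin d → ℂ} (hv : star v ⬝ᵥ v = 1) : (extendByPure I K ρ v).trace = ρ.trace := by
  have hpure := (isState_outer_prodVec (K \ I) hv).2
  calc (extendByPure I K ρ v).trace = (ρ ⊗ₖ outer (prodVec (K \ I) v)).trace :=
        (splitConfig_bijective h).sum_comp fun p => (ρ ⊗ₖ outer (prodVec (K \ I) v)) p p
    _ = ρ.trace := by rw [trace_kronecker, hpure, mul_one]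

lemma extendByPure_apply_restrict {I K : Finset (Fin n)} (h : I ⊆ K)
    (ρ : Matrix (I → Fin d) (I → Fin d) ℂ) (v : Fin d → ℂ) (x y : Fin n → Fin d) :
    extendByPure I K ρ v (fun k : K => x k) (fun k : K => y k) =
      ρ (fun i : I => x i) (fun i : I => y i) * ∏ j ∈ K \ I, v (x j) * star (v (y j)) := by
  rw [extendByPure, submatrix_apply, splitConfig, splitConfig, kronecker_apply,
    restrictConfig_restrict h, restrictConfig_restrict h, restrictConfig_restrict Finset.sdiff_subset,
    restrictConfig_restrict Finset.sdiff_subset, outer_prodVec_apply_restrict]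

lemma extendByPure_outer_prodVec {I K : Finset (Fin n)} (h : I ⊆ K) (v : Fin d → ℂ) :
    extendByPure I K (outer (prodVec I v)) v = outer (prodVec K v) := by
  ext a b
  rw [← restrict_padConfig K a, ← restrict_padConfig K b, extendByPure_apply_restrict h,
    outer_prodVec_apply_restrict, outer_prodVec_apply_restrict, mul_comm,
    Finset.prod_sdiff h]

lemma embed_add_outer (I : Finset (Fin n)) (ρ : Matrix (I → Fin d) (I → Fin d) ℂ)
    (v : Fin d → ℂ) (ε δ : ℝ) (Qt : Matrix (Fin d) (Fin d) ℂ) :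
    embed I ρ (ε • outer v + δ • Qt) = ∑ K with I ⊆ K,
      (ε ^ (K \ I).card * δ ^ Kᶜ.card) • embed K (extendByPure I K ρ v) Qt := by
  ext x y
  simp only [embed, of_apply, Matrix.add_apply, Matrix.smul_apply, Matrix.sum_apply, outer]
  rw [Finset.prod_add_compl, Finset.mul_sum]
  refine Finset.sum_congr rfl fun K hK => ?_
  rw [extendByPure_apply_restrict (Finset.mem_filter.mp hK).2]
  simp only [Complex.real_smul, Finset.prod_mul_distrib, Finset.prod_const]
  push_cast
  ring

def flatWeight (μ : Finset (Fin n) → ℝ) (ε δ : ℝ) (I K : Finset (Fin n)) : ℝ :=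
  μ I * (ε ^ (K \ I).card * δ ^ Kᶜ.card)

noncomputable def flatMeasure (μ : Finset (Fin n) → ℝ) (ε δ : ℝ) (K : Finset (Fin n)) : ℝ :=
  ∑ I ∈ K.powerset, flatWeight μ ε δ I K

noncomputable def flatMixture (μ : Finset (Fin n) → ℝ) (ε δ : ℝ)
    (ρ : (I : Finset (Fin n)) → Matrix (I → Fin d) (I → Fin d) ℂ) (v : Fin d → ℂ)
    (K : Finset (Fin n)) : Matrix (K → Fin d) (K → Fin d) ℂ :=
  ∑ I ∈ K.powerset, flatWeight μ ε δ I K • extendByPure I K (ρ I) v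

/-- Where `flatMeasure` vanishes any state would do; we take the pure one. -/
noncomputable def flatStates (μ : Finset (Fin n) → ℝ) (ε δ : ℝ)
    (ρ : (I : Finset (Fin n)) → Matrix (I → Fin d) (I → Fin d) ℂ) (v : Fin d → ℂ)
    (K : Finset (Fin n)) : Matrix (K → Fin d) (K → Fin d) ℂ :=
  if flatMeasure μ ε δ K = 0 then outer (prodVec K v)
  else (flatMeasure μ ε δ K)⁻¹ • flatMixture μ ε δ ρ v K

section

variable {μ : Finset (Fin n) → ℝ} {ε δ : ℝ}

lemma flatWeight_nonneg (hμ : ∀ I, 0 ≤ μ I) (hε : 0 ≤ ε) (hδ : 0 ≤ δ) (I K : Finset (Fin n)) :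
    0 ≤ flatWeight μ ε δ I K :=
  mul_nonneg (hμ I) (by positivity)

lemma flatMeasure_nonneg (hμ : ∀ I, 0 ≤ μ I) (hε : 0 ≤ ε) (hδ : 0 ≤ δ) (K : Finset (Fin n)) :
    0 ≤ flatMeasure μ ε δ K :=
  Finset.sum_nonneg fun I _ => flatWeight_nonneg hμ hε hδ I K

lemma sum_flatMeasure (hμ : ∑ I, μ I = 1) (hεδ : ε + δ = 1) : ∑ K, flatMeasure μ ε δ K = 1 := by
  simp only [flatMeasure, flatWeight]
  rw [Finset.sum_powerset_comm, ← hμ]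
  refine Finset.sum_congr rfl fun I _ => ?_
  have hbinom := Finset.prod_add_compl (fun _ => ε) (fun _ => δ) I
  simp only [hεδ, Finset.prod_const, one_pow] at hbinom
  rw [← Finset.mul_sum, ← hbinom, mul_one]

lemma flatMeasure_smul_flatStates (hμ : ∀ I, 0 ≤ μ I) (hε : 0 ≤ ε) (hδ : 0 ≤ δ)
    (ρ : (I : Finset (Fin n)) → Matrix (I → Fin d) (I → Fin d) ℂ) (v : Fin d → ℂ)
    (K : Finset (Fin n)) :
    flatMeasure μ ε δ K • flatStates μ ε δ ρ v K = flatMixture μ ε δ ρ v K := by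
  by_cases h0 : flatMeasure μ ε δ K = 0
  · have hw := (Finset.sum_eq_zero_iff_of_nonneg fun I _ => flatWeight_nonneg hμ hε hδ I K).mp h0
    rw [h0, zero_smul, flatMixture]
    exact (Finset.sum_eq_zero fun I hI => by rw [hw I hI, zero_smul]).symm
  · rw [flatStates, if_neg h0, smul_inv_smul₀ h0]

lemma isState_flatStates (hμ : ∀ I, 0 ≤ μ I) (hε : 0 ≤ ε) (hδ : 0 ≤ δ)
    {ρ : (I : Finset (Fin n)) → Matrix (I → Fin d) (I → Fin d) ℂ} (hρ : ∀ I, IsState (ρ I))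
    {v : Fin d → ℂ} (hv : star v ⬝ᵥ v = 1) (K : Finset (Fin n)) :
    IsState (flatStates μ ε δ ρ v K) := by
  rw [flatStates]
  split_ifs with h0
  · exact isState_outer_prodVec K hv
  have hpsd : (flatMixture μ ε δ ρ v K).PosSemidef :=
    posSemidef_sum _ fun I _ =>
      (posSemidef_extendByPure I K (hρ I).1 v).smul (flatWeight_nonneg hμ hε hδ I K)
  have htrace : (flatMixture μ ε δ ρ v K).trace = (flatMeasure μ ε δ K : ℂ) := by
    rw [flatMixture, flatMeasure, trace_sum]
    push_cast
    refine Finset.sum_congr rfl fun I hI => ?_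
    rw [trace_smul, trace_extendByPure (Finset.mem_powerset.mp hI) _ hv, (hρ I).2,
      Complex.real_smul, mul_one]
  refine ⟨hpsd.smul (inv_nonneg.mpr (flatMeasure_nonneg hμ hε hδ K)), ?_⟩
  rw [trace_smul, htrace, Complex.real_smul, ← Complex.ofReal_mul, inv_mul_cancel₀ h0,
    Complex.ofReal_one]

lemma flatStates_outer_prodVec (v : Fin d → ℂ) :
    flatStates μ ε δ (fun I => outer (prodVec I v)) v = fun K => outer (prodVec K v) := by
  funext K
  rw [flatStates]
  split_ifs with h0
  · rfl
  rw [flatMixture, Finset.sum_congr rfl fun I hI => by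
      rw [extendByPure_outer_prodVec (Finset.mem_powerset.mp hI)],
    ← Finset.sum_smul, ← flatMeasure, inv_smul_smul₀ h0]

lemma alignOp_add_outer (hμ : ∀ I, 0 ≤ μ I) (hε : 0 ≤ ε) (hδ : 0 ≤ δ)
    (ρ : (I : Finset (Fin n)) → Matrix (I → Fin d) (I → Fin d) ℂ) (v : Fin d → ℂ)
    (Qt : Matrix (Fin d) (Fin d) ℂ) :
    alignOp μ ρ (ε • outer v + δ • Qt) = alignOp (flatMeasure μ ε δ) (flatStates μ ε δ ρ v) Qt := by
  calc alignOp μ ρ (ε • outer v + δ • Qt)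
      = ∑ I, ∑ K with I ⊆ K,
          flatWeight μ ε δ I K • embed K (extendByPure I K (ρ I) v) Qt := by
        simp only [alignOp, embed_add_outer, Finset.smul_sum, smul_smul, flatWeight]
    _ = ∑ K, embed K (flatMixture μ ε δ ρ v K) Qt := by
        simp only [← Finset.sum_powerset_comm, flatMixture, embed_sum, embed_smul]
    _ = _ := by
        simp only [alignOp, ← flatMeasure_smul_flatStates hμ hε hδ, embed_smul]

end

end

lemma sum_smul_eq_flatten {E : Type*} [AddCommGroup E] [Module ℝ E] {d : ℕ} [NeZero d]
    (lam : Fin d → ℝ) (P : Fin d → E) :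
    ∑ i, lam i • P i =
      (lam 0 - lam 1) • P 0 + ∑ i : Fin d, (if i.val ≤ 1 then lam 1 else lam i) • P i := by
  have hdiff : ∀ i : Fin d, lam i - (if i.val ≤ 1 then lam 1 else lam i) =
      if i = 0 then lam 0 - lam 1 else 0 := by
    intro i
    rcases Nat.lt_or_ge 1 i.val with hi | hi
    · rw [if_neg (Nat.not_le.mpr hi), if_neg (fun h => by simp [h] at hi), sub_self]
    rcases Nat.le_one_iff_eq_zero_or_eq_one.mp hi with hi0 | hi1
    · obtain rfl : i = 0 := Fin.ext hi0
      simp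
    · have hd : 1 < d := hi1 ▸ i.isLt
      obtain rfl : i = 1 := Fin.ext (by rw [hi1, Fin.val_one', Nat.mod_eq_of_lt hd])
      rw [if_pos hi, if_neg (fun h => by simp [Fin.ext_iff, Nat.mod_eq_of_lt hd] at h), sub_self]
  have hsub : ∑ i, lam i • P i - ∑ i : Fin d, (if i.val ≤ 1 then lam 1 else lam i) • P i =
      (lam 0 - lam 1) • P 0 := by
    rw [← Finset.sum_sub_distrib]
    simp only [← sub_smul, hdiff]
    simp
  rw [← hsub, sub_add_cancel]

theorem reduction_to_flatter_spectrum_general {n d : ℕ} [NeZero d]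
    (f : Matrix (Fin n → Fin d) (Fin n → Fin d) ℂ → ℝ)
    (q : Fin d → Fin d → ℂ) (hq : OrthonormalFam q)
    (lam : Fin d → ℝ) (hlam : Antitone lam) (hlam0 : ∀ i, 0 ≤ lam i)
    (hlam1 : ∑ i, lam i = 1)
    (hrank2 : 0 < lam 1)  -- `Q` has rank at least 2
    (Q : Matrix (Fin d) (Fin d) ℂ) (hQ : Q = ∑ i, (lam i : ℂ) • outer (q i))
    (Qt : Matrix (Fin d) (Fin d) ℂ)
    (hQt : Qt = (1 - (lam 0 - lam 1))⁻¹ •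
      ∑ i : Fin d, (((if i.val ≤ 1 then lam 1 else lam i) : ℝ) : ℂ) • outer (q i))
    (hopt : ∀ μt : Finset (Fin n) → ℝ, (∀ I, 0 ≤ μt I) → ∑ I, μt I = 1 →
      ∀ ρ : (I : Finset (Fin n)) → Matrix (↥I → Fin d) (↥I → Fin d) ℂ,
        (∀ I, IsState (ρ I)) →
        f (alignOp μt ρ Qt) ≤ f (alignOp μt (fun I => outer (prodVec I (q 0))) Qt))
    (μ : Finset (Fin n) → ℝ) (hμ0 : ∀ I, 0 ≤ μ I) (hμ1 : ∑ I, μ I = 1)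
    (ρ : (I : Finset (Fin n)) → Matrix (↥I → Fin d) (↥I → Fin d) ℂ)
    (hρ : ∀ I, IsState (ρ I)) :
    f (alignOp μ ρ Q) ≤ f (alignOp μ (fun I => outer (prodVec I (q 0))) Q) := by
  set ε := lam 0 - lam 1
  have hε : 0 ≤ ε := sub_nonneg.mpr (hlam (Fin.zero_le 1))
  have hδ : 0 < 1 - ε := by
    have : lam 0 ≤ 1 := hlam1 ▸ Finset.single_le_sum (fun i _ => hlam0 i) (Finset.mem_univ 0)
    linarith
  have hQ' : Q = ε • outer (q 0) + (1 - ε) • Qt := by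
    rw [hQ, hQt, smul_inv_smul₀ hδ.ne']
    simpa only [Complex.coe_smul] using sum_smul_eq_flatten lam (fun i => outer (q i))
  have hv : star (q 0) ⬝ᵥ q 0 = 1 := (hq 0 0).trans (if_pos rfl)
  rw [hQ', alignOp_add_outer hμ0 hε hδ.le, alignOp_add_outer hμ0 hε hδ.le,
    flatStates_outer_prodVec]
  exact hopt _ (flatMeasure_nonneg hμ0 hε hδ.le) (sum_flatMeasure hμ1 (add_sub_cancel ε 1)) _
    (isState_flatStates hμ0 hε hδ.le hρ hv)

/-- reduction to a flatter spectrum. If the spin alignment problem for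
`Q̃` (obtained by flattening the top two eigenvalues of `Q`) is maximized at
`(|q₁⟩⟨q₁|^{⊗I})_I` for all probability measures `μ̃`, then so is the problem for `Q`. -/
theorem reduction_to_flatter_spectrum {n d : ℕ} [NeZero d] (hd : 2 ≤ d)
    (f : Matrix (Fin n → Fin d) (Fin n → Fin d) ℂ → ℝ)
    (hconv : ConvexOn ℝ Set.univ f) (hcont : Continuous f)
    (hui : ∀ U ∈ Matrix.unitaryGroup (Fin n → Fin d) ℂ,
      ∀ M, f (U * M * star U) = f M)
    (q : Fin d → Fin d → ℂ) (hq : OrthonormalFam q)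
    (lam : Fin d → ℝ) (hlam : Antitone lam) (hlam0 : ∀ i, 0 ≤ lam i)
    (hlam1 : ∑ i, lam i = 1)
    (hrank2 : 0 < lam 1)  -- `Q` has rank at least 2
    (Q : Matrix (Fin d) (Fin d) ℂ) (hQ : Q = ∑ i, (lam i : ℂ) • outer (q i))
    (Qt : Matrix (Fin d) (Fin d) ℂ)
    (hQt : Qt = (1 - (lam 0 - lam 1))⁻¹ •
      ∑ i : Fin d, (((if i.val ≤ 1 then lam 1 else lam i) : ℝ) : ℂ) • outer (q i))
    (hopt : ∀ μt : Finset (Fin n) → ℝ, (∀ I, 0 ≤ μt I) → ∑ I, μt I = 1 →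
      ∀ ρ : (I : Finset (Fin n)) → Matrix (↥I → Fin d) (↥I → Fin d) ℂ,
        (∀ I, IsState (ρ I)) →
        f (alignOp μt ρ Qt) ≤ f (alignOp μt (fun I => outer (prodVec I (q 0))) Qt))
    (μ : Finset (Fin n) → ℝ) (hμ0 : ∀ I, 0 ≤ μ I) (hμ1 : ∑ I, μ I = 1)
    (ρ : (I : Finset (Fin n)) → Matrix (↥I → Fin d) (↥I → Fin d) ℂ)
    (hρ : ∀ I, IsState (ρ I)) :
    f (alignOp μ ρ Q) ≤ f (alignOp μ (fun I => outer (prodVec I (q 0))) Q) :=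
  reduction_to_flatter_spectrum_general f q hq lam hlam hlam0 hlam1 hrank2 Q hQ Qt hQt hopt μ hμ0
    hμ1 ρ hρ
end

section
/- Let K_1, K_2, K_3 be finite-dimensional complex inner product spaces, A_1 an operator on K_1 with operator norm at most 1, and A_3 an operator on K_3 with operator norm at most 1. Then for all operators T on K_2 ⊗ K_3 and S on K_1 ⊗ K_2 each with trace norm at most 1, the trace norm of (A_1 ⊗ T)(S ⊗ A_3) is at most 1. -/
open Finset Matrix
open scoped Kronecker ComplexOrder

/-- The trace norm `tr √(M* M)` (sum of singular values) of a matrix. -/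
noncomputable def traceNorm {m n : Type*} [Fintype m] [Fintype n] [DecidableEq n]
    (M : Matrix m n ℂ) : ℝ :=
  ∑ i, Real.sqrt ((Matrix.isHermitian_conjTranspose_mul_self M).eigenvalues i)

/-- The operator norm (largest singular value) of a matrix. -/
noncomputable def specNorm {m n : Type*} [Fintype m] [Fintype n] [DecidableEq n]
    (M : Matrix m n ℂ) : ℝ :=
  ⨆ i, Real.sqrt ((Matrix.isHermitian_conjTranspose_mul_self M).eigenvalues i)

/-! The trace norm is the least value of `∑ ‖pᵢ‖ ‖qᵢ‖` over decompositions `M = ∑ pᵢ qᵢ*`: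
a singular value decomposition attains it, and every decomposition bounds it, by Cauchy–Schwarz
and Bessel's inequality against the left and right singular vectors. So the trace norm is
subadditive, and since `(S, T) ↦ (A₁ ⊗ T)(S ⊗ A₃)` is bilinear it suffices to treat
`S = s s'*` and `T = t t'*`. Then `(A₁ ⊗ T)(S ⊗ A₃) = ∑ₕ pₕ qₕ*` with
`pₕ = A₁ s(·, h) ⊗ t` and `qₕ = s' ⊗ A₃* t'(h, ·)`, and Cauchy–Schwarz over `h` bounds its
trace norm by `‖A₁‖ ‖A₃‖ ‖s‖ ‖s'‖ ‖t‖ ‖t'‖`. Here `‖A‖` is the ℓ² operator norm, which is at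
most `specNorm A` by the C*-identity `‖A‖² = ‖AᴴA‖` and the spectral theorem for `AᴴA`. -/

open WithLp
open scoped Matrix.Norms.L2Operator InnerProductSpace

theorem sum_norm_inner_mul_norm_inner_le {𝕜 E F ι : Type*} [RCLike 𝕜] [NormedAddCommGroup E]
    [InnerProductSpace 𝕜 E] [NormedAddCommGroup F] [InnerProductSpace 𝕜 F] [Fintype ι]
    {u : ι → E} {v : ι → F} (hu : ∀ x, ∑ r, ‖inner 𝕜 (u r) x‖ ^ 2 ≤ ‖x‖ ^ 2)
    (hv : ∀ y, ∑ r, ‖inner 𝕜 (v r) y‖ ^ 2 ≤ ‖y‖ ^ 2) (x : E) (y : F) :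
    ∑ r, ‖inner 𝕜 (u r) x‖ * ‖inner 𝕜 (v r) y‖ ≤ ‖x‖ * ‖y‖ :=
  calc ∑ r, ‖inner 𝕜 (u r) x‖ * ‖inner 𝕜 (v r) y‖
      ≤ √(∑ r, ‖inner 𝕜 (u r) x‖ ^ 2) * √(∑ r, ‖inner 𝕜 (v r) y‖ ^ 2) :=
        Real.sum_mul_le_sqrt_mul_sqrt _ _ _
    _ ≤ √(‖x‖ ^ 2) * √(‖y‖ ^ 2) := by gcongr <;> simp only [hu, hv]
    _ = ‖x‖ * ‖y‖ := by rw [Real.sqrt_sq (norm_nonneg x), Real.sqrt_sq (norm_nonneg y)]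

section EuclideanNorms

variable {𝕜 α β γ : Type*} [RCLike 𝕜] [Fintype α] [Fintype β] [Fintype γ]

lemma norm_toLp_mul_prod (f : α → 𝕜) (g : β → 𝕜) :
    ‖toLp 2 fun x : α × β => f x.1 * g x.2‖ = ‖toLp 2 f‖ * ‖toLp 2 g‖ := by
  rw [← sq_eq_sq₀ (norm_nonneg _) (by positivity), mul_pow]
  simp_rw [EuclideanSpace.norm_sq_eq, Fintype.sum_prod_type, sum_mul_sum, norm_mul, mul_pow]

lemma norm_toLp_mul_prod_assoc (f : α × β → 𝕜) (g : γ → 𝕜) :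
    ‖toLp 2 fun x : α × β × γ => f (x.1, x.2.1) * g x.2.2‖ = ‖toLp 2 f‖ * ‖toLp 2 g‖ := by
  rw [← sq_eq_sq₀ (norm_nonneg _) (by positivity), mul_pow]
  simp_rw [EuclideanSpace.norm_sq_eq, Fintype.sum_prod_type, sum_mul, mul_sum, norm_mul, mul_pow]

lemma sum_norm_toLp_slice_mul_le (f : α × β → 𝕜) (g : β × γ → 𝕜) :
    ∑ b, ‖toLp 2 fun a => f (a, b)‖ * ‖toLp 2 fun c => g (b, c)‖ ≤
      ‖toLp 2 f‖ * ‖toLp 2 g‖ := by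
  have hf : ∑ b, ‖toLp 2 fun a => f (a, b)‖ ^ 2 = ‖toLp 2 f‖ ^ 2 := by
    simp_rw [EuclideanSpace.norm_sq_eq, Fintype.sum_prod_type]
    exact sum_comm
  have hg : ∑ b, ‖toLp 2 fun c => g (b, c)‖ ^ 2 = ‖toLp 2 g‖ ^ 2 := by
    simp_rw [EuclideanSpace.norm_sq_eq, Fintype.sum_prod_type]
  calc _ ≤ √(∑ b, ‖toLp 2 fun a => f (a, b)‖ ^ 2) * √(∑ b, ‖toLp 2 fun c => g (b, c)‖ ^ 2) :=
        Real.sum_mul_le_sqrt_mul_sqrt _ _ _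
    _ = ‖toLp 2 f‖ * ‖toLp 2 g‖ := by
        rw [hf, hg, Real.sqrt_sq (norm_nonneg _), Real.sqrt_sq (norm_nonneg _)]

end EuclideanNorms

namespace Matrix

lemma norm_toLp_mulVec_le {𝕜 m n : Type*} [RCLike 𝕜] [Fintype m] [Fintype n] [DecidableEq n]
    (A : Matrix m n 𝕜) (x : n → 𝕜) : ‖toLp 2 (A *ᵥ x)‖ ≤ ‖A‖ * ‖toLp 2 x‖ :=
  l2_opNorm_mulVec A (toLp 2 x)

lemma inner_toLp_mulVec_toLp_mulVec {m n : Type*} [Fintype m] [Fintype n] (M : Matrix m n ℂ)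
    (x y : n → ℂ) :
    ⟪toLp 2 (M *ᵥ x), toLp 2 (M *ᵥ y)⟫_ℂ = ⟪toLp 2 x, toLp 2 ((Mᴴ * M) *ᵥ y)⟫_ℂ := by
  rw [EuclideanSpace.inner_toLp_toLp, EuclideanSpace.inner_toLp_toLp, ← mulVec_mulVec,
    dotProduct_comm _ (star x), dotProduct_mulVec, ← star_mulVec, dotProduct_comm]

section SingularValues

variable {m n : Type*} [Fintype m] [Fintype n] [DecidableEq n]

noncomputable def rightSingularVector (M : Matrix m n ℂ) :
    OrthonormalBasis n ℂ (EuclideanSpace ℂ n) :=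
  (isHermitian_conjTranspose_mul_self M).eigenvectorBasis

noncomputable def singularValue (M : Matrix m n ℂ) (r : n) : ℝ :=
  √((isHermitian_conjTranspose_mul_self M).eigenvalues r)

/-- This is `0` where the singular value vanishes, as `(0 : ℂ)⁻¹ = 0`. -/
noncomputable def leftSingularVector (M : Matrix m n ℂ) (r : n) : EuclideanSpace ℂ m :=
  (singularValue M r : ℂ)⁻¹ • toLp 2 (M *ᵥ rightSingularVector M r)

lemma singularValue_nonneg (M : Matrix m n ℂ) (r : n) : 0 ≤ singularValue M r :=
  Real.sqrt_nonneg _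

lemma sq_singularValue (M : Matrix m n ℂ) (r : n) :
    singularValue M r ^ 2 = (isHermitian_conjTranspose_mul_self M).eigenvalues r :=
  Real.sq_sqrt (eigenvalues_conjTranspose_mul_self_nonneg M r)

lemma singularValue_le_specNorm (M : Matrix m n ℂ) (r : n) : singularValue M r ≤ specNorm M :=
  le_ciSup (f := singularValue M) (Set.finite_range _).bddAbove r

lemma inner_mulVec_rightSingularVector (M : Matrix m n ℂ) (r s : n) :
    ⟪toLp 2 (M *ᵥ rightSingularVector M r), toLp 2 (M *ᵥ rightSingularVector M s)⟫_ℂ =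
      if r = s then (singularValue M r : ℂ) ^ 2 else 0 := by
  have hH := isHermitian_conjTranspose_mul_self M
  rw [inner_toLp_mulVec_toLp_mulVec, rightSingularVector, hH.mulVec_eigenvectorBasis, toLp_smul,
    toLp_ofLp, inner_smul_right_eq_smul, orthonormal_iff_ite.1 hH.eigenvectorBasis.orthonormal]
  split_ifs with h
  · rw [h, ← Complex.ofReal_pow, sq_singularValue]
    simp
  · simp

lemma norm_mulVec_rightSingularVector (M : Matrix m n ℂ) (r : n) :
    ‖toLp 2 (M *ᵥ rightSingularVector M r)‖ = singularValue M r := by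
  rw [norm_eq_sqrt_re_inner (𝕜 := ℂ), inner_mulVec_rightSingularVector, if_pos rfl,
    ← Complex.ofReal_pow, RCLike.re_to_complex, Complex.ofReal_re,
    Real.sqrt_sq (singularValue_nonneg M r)]

lemma inner_leftSingularVector_mulVec (M : Matrix m n ℂ) (r : n) :
    ⟪leftSingularVector M r, toLp 2 (M *ᵥ rightSingularVector M r)⟫_ℂ = singularValue M r := by
  rw [leftSingularVector, inner_smul_left, inner_mulVec_rightSingularVector, if_pos rfl,
    map_inv₀, Complex.conj_ofReal, ← div_eq_inv_mul, sq, mul_self_div_self]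

lemma orthonormal_leftSingularVector (M : Matrix m n ℂ) :
    Orthonormal ℂ fun r : {r // singularValue M r ≠ 0} => leftSingularVector M r := by
  rw [orthonormal_iff_ite]
  rintro ⟨r, hr⟩ ⟨s, hs⟩
  simp only [leftSingularVector, inner_smul_left, inner_smul_right,
    inner_mulVec_rightSingularVector, Subtype.mk.injEq, map_inv₀, Complex.conj_ofReal]
  split_ifs with h
  · subst h
    field_simp
  · simp

lemma sum_norm_inner_leftSingularVector_sq_le (M : Matrix m n ℂ) (x : EuclideanSpace ℂ m) :
    ∑ r, ‖⟪leftSingularVector M r, x⟫_ℂ‖ ^ 2 ≤ ‖x‖ ^ 2 := by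
  classical
  calc ∑ r, ‖⟪leftSingularVector M r, x⟫_ℂ‖ ^ 2
      = ∑ r : {r // singularValue M r ≠ 0}, ‖⟪leftSingularVector M r, x⟫_ℂ‖ ^ 2 := by
        rw [← sum_filter_of_ne (p := fun r => singularValue M r ≠ 0) fun r _ h => ?_,
          sum_subtype (p := fun r => singularValue M r ≠ 0) _ (by simp)]
        contrapose! h
        simp [leftSingularVector, h]
    _ ≤ ‖x‖ ^ 2 := (orthonormal_leftSingularVector M).sum_inner_products_le x

lemma sum_vecMulVec_rightSingularVector (M : Matrix m n ℂ) :
    ∑ r, vecMulVec (M *ᵥ rightSingularVector M r) (star (rightSingularVector M r).ofLp) = M := by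
  have hb : ∑ r, vecMulVec (rightSingularVector M r).ofLp (star (rightSingularVector M r).ofLp)
      = 1 := by
    simp_rw [← InnerProductSpace.symm_toEuclideanLin_rankOne, ← map_sum,
      ← ContinuousLinearMap.toLinearMap_sum, OrthonormalBasis.sum_rankOne_eq_id]
    simp
  simp_rw [← mul_vecMulVec, ← Matrix.mul_sum, hb, Matrix.mul_one]

lemma l2_opNorm_le_specNorm (A : Matrix m n ℂ) : ‖A‖ ≤ specNorm A := by
  set hH := isHermitian_conjTranspose_mul_self A
  have hs : 0 ≤ specNorm A := Real.iSup_nonneg (singularValue_nonneg A)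
  refine pow_le_pow_iff_left₀ (norm_nonneg A) hs two_ne_zero |>.1 ?_
  calc ‖A‖ ^ 2 = ‖Aᴴ * A‖ := by rw [sq, l2_opNorm_conjTranspose_mul_self]
    _ = ‖diagonal (RCLike.ofReal ∘ hH.eigenvalues : n → ℂ)‖ := by
      conv_lhs => rw [hH.spectral_theorem, Unitary.conjStarAlgAut_apply]
      rw [← Unitary.coe_star, CStarRing.norm_mul_coe_unitary, CStarRing.norm_coe_unitary_mul]
    _ ≤ specNorm A ^ 2 := by
      rw [l2_opNorm_diagonal]
      refine (pi_norm_le_iff_of_nonneg (by positivity)).2 fun r => ?_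
      rw [Function.comp_apply, RCLike.norm_ofReal, ← sq_singularValue, abs_sq]
      exact pow_le_pow_left₀ (singularValue_nonneg A r) (singularValue_le_specNorm A r) 2

end SingularValues

end Matrix

section TraceNorm

variable {m n : Type*} [Fintype m] [Fintype n] [DecidableEq n]

lemma traceNorm_eq_sum_singularValue (M : Matrix m n ℂ) :
    traceNorm M = ∑ r, M.singularValue r := rfl

lemma traceNorm_nonneg (M : Matrix m n ℂ) : 0 ≤ traceNorm M :=
  sum_nonneg fun r _ => M.singularValue_nonneg r

lemma traceNorm_eq_sum_norm_mul_norm (M : Matrix m n ℂ) :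
    traceNorm M = ∑ r, ‖toLp 2 (M *ᵥ M.rightSingularVector r)‖ *
      ‖toLp 2 (M.rightSingularVector r).ofLp‖ := by
  simp [traceNorm_eq_sum_singularValue, norm_mulVec_rightSingularVector]

theorem traceNorm_le_of_eq_sum_vecMulVec {ι : Type*} [Fintype ι] {M : Matrix m n ℂ}
    {p : ι → m → ℂ} {q : ι → n → ℂ} (hM : M = ∑ i, vecMulVec (p i) (star (q i))) :
    traceNorm M ≤ ∑ i, ‖toLp 2 (p i)‖ * ‖toLp 2 (q i)‖ := by
  set u := M.leftSingularVector
  set v := M.rightSingularVector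
  have hMv : ∀ r, toLp 2 (M *ᵥ v r) = ∑ i, ⟪toLp 2 (q i), v r⟫_ℂ • toLp 2 (p i) := by
    intro r
    rw [hM, sum_mulVec, toLp_sum]
    refine sum_congr rfl fun i _ => ?_
    rw [vecMulVec_mulVec, op_smul_eq_smul, toLp_smul, EuclideanSpace.inner_eq_star_dotProduct,
      dotProduct_comm]
  have hv : ∀ y, ∑ r, ‖⟪v r, y⟫_ℂ‖ ^ 2 ≤ ‖y‖ ^ 2 := fun y =>
    Orthonormal.sum_inner_products_le y v.orthonormal
  calc traceNorm M = ∑ r, RCLike.re ⟪u r, toLp 2 (M *ᵥ v r)⟫_ℂ := by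
        simp only [u, v, inner_leftSingularVector_mulVec, RCLike.re_to_complex, Complex.ofReal_re,
          traceNorm_eq_sum_singularValue]
    _ ≤ ∑ r, ∑ i, ‖⟪u r, toLp 2 (p i)⟫_ℂ‖ * ‖⟪v r, toLp 2 (q i)⟫_ℂ‖ := by
        gcongr with r
        rw [hMv, inner_sum]
        refine (RCLike.re_le_norm _).trans ((norm_sum_le _ _).trans_eq ?_)
        simp_rw [inner_smul_right, norm_mul, norm_inner_symm, mul_comm]
    _ = ∑ i, ∑ r, ‖⟪u r, toLp 2 (p i)⟫_ℂ‖ * ‖⟪v r, toLp 2 (q i)⟫_ℂ‖ := sum_comm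
    _ ≤ ∑ i, ‖toLp 2 (p i)‖ * ‖toLp 2 (q i)‖ := by
        gcongr with i
        exact sum_norm_inner_mul_norm_inner_le M.sum_norm_inner_leftSingularVector_sq_le hv _ _

theorem traceNorm_sum_le {ι : Type*} [Fintype ι] (M : ι → Matrix m n ℂ) :
    traceNorm (∑ i, M i) ≤ ∑ i, traceNorm (M i) := by
  calc traceNorm (∑ i, M i)
      ≤ ∑ x : ι × n, ‖toLp 2 (M x.1 *ᵥ (M x.1).rightSingularVector x.2)‖ *
          ‖toLp 2 ((M x.1).rightSingularVector x.2).ofLp‖ :=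
        traceNorm_le_of_eq_sum_vecMulVec <| by
          simp_rw [Fintype.sum_prod_type, sum_vecMulVec_rightSingularVector]
    _ = ∑ i, traceNorm (M i) := by
        simp_rw [Fintype.sum_prod_type, traceNorm_eq_sum_norm_mul_norm]

theorem traceNorm_vecMulVec_le (p : m → ℂ) (q : n → ℂ) :
    traceNorm (vecMulVec p (star q)) ≤ ‖toLp 2 p‖ * ‖toLp 2 q‖ := by
  simpa using traceNorm_le_of_eq_sum_vecMulVec (ι := Unit) (p := fun _ => p) (q := fun _ => q)
    (by simp)

end TraceNorm

namespace Matrix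

def kroneckerAssoc {l m n α : Type*} [Mul α] (S : Matrix (l × m) (l × m) α) (B : Matrix n n α) :
    Matrix (l × m × n) (l × m × n) α :=
  of fun x y => S (x.1, x.2.1) (y.1, y.2.1) * B x.2.2 y.2.2

section Kronecker

variable {l m n ι α : Type*} [Fintype ι] [NonUnitalNonAssocSemiring α]

lemma kroneckerAssoc_sum (S : ι → Matrix (l × m) (l × m) α) (B : Matrix n n α) :
    kroneckerAssoc (∑ i, S i) B = ∑ i, kroneckerAssoc (S i) B := by
  ext x y
  simp [kroneckerAssoc, sum_apply, sum_mul]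

lemma kronecker_sum (A : Matrix l l α) (T : ι → Matrix m m α) :
    A ⊗ₖ ∑ i, T i = ∑ i, A ⊗ₖ T i := by
  ext x y
  simp [sum_apply, mul_sum]

end Kronecker

variable {l m n : Type*} [Fintype l] [DecidableEq l] [Fintype m] [DecidableEq m]
  [Fintype n] [DecidableEq n]

omit [DecidableEq l] [DecidableEq m] [DecidableEq n] in
lemma kronecker_vecMulVec_mul_kroneckerAssoc_vecMulVec (A : Matrix l l ℂ) (B : Matrix n n ℂ)
    (s s' : l × m → ℂ) (t t' : m × n → ℂ) :
    (A ⊗ₖ vecMulVec t (star t')) * kroneckerAssoc (vecMulVec s (star s')) B =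
      ∑ h, vecMulVec (fun x => (A *ᵥ fun g => s (g, h)) x.1 * t x.2)
        (star fun y => s' (y.1, y.2.1) * (Bᴴ *ᵥ fun k => t' (h, k)) y.2.2) := by
  ext a b
  simp only [mul_apply, kroneckerAssoc, sum_apply, vecMulVec_apply, of_apply, kroneckerMap_apply,
    Fintype.sum_prod_type, mulVec, dotProduct, conjTranspose_apply, Pi.star_apply, star_mul',
    star_sum, star_star, sum_mul, mul_sum]
  rw [sum_comm]
  refine sum_congr rfl fun h _ => ?_
  rw [sum_comm]
  refine sum_congr rfl fun k _ => sum_congr rfl fun g _ => ?_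
  ring

theorem traceNorm_kronecker_vecMulVec_mul_kroneckerAssoc_vecMulVec_le (A : Matrix l l ℂ)
    (B : Matrix n n ℂ) (s s' : l × m → ℂ) (t t' : m × n → ℂ) :
    traceNorm ((A ⊗ₖ vecMulVec t (star t')) * kroneckerAssoc (vecMulVec s (star s')) B) ≤
      ‖A‖ * ‖B‖ * (‖toLp 2 s‖ * ‖toLp 2 s'‖) * (‖toLp 2 t‖ * ‖toLp 2 t'‖) := by
  rw [kronecker_vecMulVec_mul_kroneckerAssoc_vecMulVec]
  refine (traceNorm_sum_le _).trans ?_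
  calc _ ≤ ∑ h, (‖A‖ * ‖toLp 2 fun g => s (g, h)‖ * ‖toLp 2 t‖) *
          (‖toLp 2 s'‖ * (‖B‖ * ‖toLp 2 fun k => t' (h, k)‖)) := by
        gcongr with h
        refine (traceNorm_vecMulVec_le _ _).trans ?_
        rw [norm_toLp_mul_prod, norm_toLp_mul_prod_assoc, ← l2_opNorm_conjTranspose B]
        gcongr <;> exact norm_toLp_mulVec_le _ _
    _ = ‖A‖ * ‖B‖ * ‖toLp 2 s'‖ * ‖toLp 2 t‖ *
          ∑ h, ‖toLp 2 fun g => s (g, h)‖ * ‖toLp 2 fun k => t' (h, k)‖ := by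
        rw [mul_sum]
        exact sum_congr rfl fun h _ => by ring
    _ ≤ ‖A‖ * ‖B‖ * ‖toLp 2 s'‖ * ‖toLp 2 t‖ * (‖toLp 2 s‖ * ‖toLp 2 t'‖) := by
        gcongr
        exact sum_norm_toLp_slice_mul_le s t'
    _ = _ := by ring

theorem traceNorm_kronecker_mul_kroneckerAssoc_le (A : Matrix l l ℂ) (B : Matrix n n ℂ)
    (T : Matrix (m × n) (m × n) ℂ) (S : Matrix (l × m) (l × m) ℂ) :
    traceNorm ((A ⊗ₖ T) * kroneckerAssoc S B) ≤ ‖A‖ * ‖B‖ * traceNorm S * traceNorm T := by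
  conv_lhs => rw [← sum_vecMulVec_rightSingularVector S, ← sum_vecMulVec_rightSingularVector T,
    kroneckerAssoc_sum, kronecker_sum, sum_mul_sum]
  calc _ ≤ ∑ j, ∑ i, ‖A‖ * ‖B‖ *
          (‖toLp 2 (S *ᵥ S.rightSingularVector i)‖ * ‖toLp 2 (S.rightSingularVector i).ofLp‖) *
          (‖toLp 2 (T *ᵥ T.rightSingularVector j)‖ * ‖toLp 2 (T.rightSingularVector j).ofLp‖) := by
        refine (traceNorm_sum_le _).trans (sum_le_sum fun j _ => (traceNorm_sum_le _).trans ?_)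
        gcongr with i
        exact traceNorm_kronecker_vecMulVec_mul_kroneckerAssoc_vecMulVec_le _ _ _ _ _ _
    _ = ‖A‖ * ‖B‖ * traceNorm S * traceNorm T := by
        simp_rw [traceNorm_eq_sum_norm_mul_norm S, traceNorm_eq_sum_norm_mul_norm T, mul_sum,
          sum_mul]

end Matrix

/-- if `‖A₁‖ ≤ 1`, `‖A₃‖ ≤ 1` and `T`, `S` have trace norm at most 1,
then `(A₁ ⊗ T)(S ⊗ A₃)` has trace norm at most 1. -/
theorem trace_norm_product_bound {m₁ m₂ m₃ : Type*}
    [Fintype m₁] [DecidableEq m₁] [Fintype m₂] [DecidableEq m₂]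
    [Fintype m₃] [DecidableEq m₃]
    (A₁ : Matrix m₁ m₁ ℂ) (A₃ : Matrix m₃ m₃ ℂ)
    (hA₁ : specNorm A₁ ≤ 1) (hA₃ : specNorm A₃ ≤ 1)
    (T : Matrix (m₂ × m₃) (m₂ × m₃) ℂ) (S : Matrix (m₁ × m₂) (m₁ × m₂) ℂ)
    (hT : traceNorm T ≤ 1) (hS : traceNorm S ≤ 1) :
    traceNorm ((A₁ ⊗ₖ T) *
      Matrix.of (fun (x y : m₁ × m₂ × m₃) =>
        S (x.1, x.2.1) (y.1, y.2.1) * A₃ x.2.2 y.2.2)) ≤ 1 := by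
  have h₁ := (l2_opNorm_le_specNorm A₁).trans hA₁
  have h₃ := (l2_opNorm_le_specNorm A₃).trans hA₃
  calc _ ≤ ‖A₁‖ * ‖A₃‖ * traceNorm S * traceNorm T :=
        traceNorm_kronecker_mul_kroneckerAssoc_le A₁ A₃ T S
    _ ≤ 1 := mul_le_one₀ (mul_le_one₀ (mul_le_one₀ h₁ (norm_nonneg _) h₃) (traceNorm_nonneg S) hS)
        (traceNorm_nonneg T) hT
end

section
/- Let |v⟩ ∈ K_1 ⊗ K_2 and |u⟩ ∈ K_2 ⊗ K_3 be vectors of norm at most 1. Then the operator ⟨u|_{2,3} |v⟩_{1,2} : K_3 → K_1 obtained by contracting over K_2 has trace norm at most 1. -/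
/-!
Write the contraction as `M = V * W`, where `V` and `W` are the coefficient matrices of `v` and
`⟨u|`. For an orthonormal eigenbasis `wᵢ` of `Mᴴ M` the vectors `M wᵢ` are pairwise orthogonal
with norms the singular values `σᵢ`, so normalising the nonzero ones gives an orthonormal family
`yᵢ` with `σᵢ = ⟪yᵢ, M wᵢ⟫ = ⟪Vᴴ yᵢ, W wᵢ⟫`. Cauchy–Schwarz bounds `∑ σᵢ` by
`(∑ ‖Vᴴ yᵢ‖²)^½ (∑ ‖W wᵢ‖²)^½`, and Bessel's inequality bounds the two sums by the squared
Hilbert–Schmidt norms `‖v‖²` and `‖u‖²`.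
-/

open Finset Matrix
open scoped Kronecker ComplexOrder

open scoped InnerProductSpace
open WithLp (toLp ofLp)

section
variable {𝕜 : Type*} [RCLike 𝕜] {ι l m n : Type*} [Fintype l] [Fintype m] [Fintype n]

theorem Matrix.inner_toLp_mulVec (A : Matrix m n 𝕜) (x : EuclideanSpace 𝕜 m) (y : n → 𝕜) :
    ⟪x, toLp 2 (A *ᵥ y)⟫_𝕜 = ⟪toLp 2 (Aᴴ *ᵥ ofLp x), toLp 2 y⟫_𝕜 := by
  rw [EuclideanSpace.inner_eq_star_dotProduct, EuclideanSpace.inner_toLp_toLp, star_mulVec,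
    conjTranspose_conjTranspose, dotProduct_comm, dotProduct_mulVec, dotProduct_comm]

theorem inner_inv_norm_smul_self {E : Type*} [NormedAddCommGroup E] [InnerProductSpace 𝕜 E]
    {x : E} (hx : x ≠ 0) : ⟪(‖x‖⁻¹ : 𝕜) • x, x⟫_𝕜 = ‖x‖ := by
  have : ‖x‖ ≠ 0 := norm_ne_zero_iff.mpr hx
  rw [inner_smul_left, inner_self_eq_norm_sq_to_K]
  simp [field]

theorem orthonormal_normalize_of_pairwise_inner_eq_zero {E : Type*} [NormedAddCommGroup E]
    [InnerProductSpace 𝕜 E] {z : ι → E} (hz : Pairwise fun i j => ⟪z i, z j⟫_𝕜 = 0) :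
    Orthonormal 𝕜 fun i : {i // z i ≠ 0} => (‖z i‖⁻¹ : 𝕜) • z i := by
  refine ⟨fun i => norm_smul_inv_norm i.2, fun i j hij => ?_⟩
  dsimp only
  rw [inner_smul_left, inner_smul_right, hz (Subtype.coe_injective.ne hij), mul_zero, mul_zero]

namespace Orthonormal

variable [Fintype ι]

theorem sum_norm_sq_mulVec_le (A : Matrix m n 𝕜) {y : ι → EuclideanSpace 𝕜 n}
    (hy : Orthonormal 𝕜 y) :
    ∑ i, ‖toLp 2 (A *ᵥ ofLp (y i))‖ ^ 2 ≤ ∑ a, ∑ b, ‖A a b‖ ^ 2 := by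
  have hrow : ∀ i a, ‖(A *ᵥ ofLp (y i)) a‖ = ‖⟪y i, toLp 2 (star (A a))⟫_𝕜‖ := by
    intro i a
    rw [EuclideanSpace.inner_eq_star_dotProduct, star_dotProduct_star, norm_star, dotProduct_comm]
    rfl
  calc ∑ i, ‖toLp 2 (A *ᵥ ofLp (y i))‖ ^ 2
      = ∑ a, ∑ i, ‖⟪y i, toLp 2 (star (A a))⟫_𝕜‖ ^ 2 := by
        simp only [EuclideanSpace.norm_sq_eq, hrow]
        exact Finset.sum_comm
    _ ≤ ∑ a, ‖toLp 2 (star (A a))‖ ^ 2 :=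
        Finset.sum_le_sum fun a _ => hy.sum_inner_products_le _
    _ = ∑ a, ∑ b, ‖A a b‖ ^ 2 := by
        simp only [EuclideanSpace.norm_sq_eq, Pi.star_apply, norm_star]

theorem sum_norm_inner_mul_mulVec_le (V : Matrix l m 𝕜) (W : Matrix m n 𝕜)
    {y : ι → EuclideanSpace 𝕜 l} {w : ι → EuclideanSpace 𝕜 n}
    (hy : Orthonormal 𝕜 y) (hw : Orthonormal 𝕜 w) :
    ∑ i, ‖⟪y i, toLp 2 ((V * W) *ᵥ ofLp (w i))⟫_𝕜‖ ≤
      √(∑ a, ∑ b, ‖V a b‖ ^ 2) * √(∑ b, ∑ c, ‖W b c‖ ^ 2) := by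
  have hconj : ∑ b, ∑ a, ‖Vᴴ b a‖ ^ 2 = ∑ a, ∑ b, ‖V a b‖ ^ 2 := by
    simp only [conjTranspose_apply, norm_star]
    exact Finset.sum_comm
  calc ∑ i, ‖⟪y i, toLp 2 ((V * W) *ᵥ ofLp (w i))⟫_𝕜‖
      ≤ ∑ i, ‖toLp 2 (Vᴴ *ᵥ ofLp (y i))‖ * ‖toLp 2 (W *ᵥ ofLp (w i))‖ := by
        refine Finset.sum_le_sum fun i _ => ?_
        rw [← mulVec_mulVec, inner_toLp_mulVec]
        exact norm_inner_le_norm _ _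
    _ ≤ √(∑ i, ‖toLp 2 (Vᴴ *ᵥ ofLp (y i))‖ ^ 2) * √(∑ i, ‖toLp 2 (W *ᵥ ofLp (w i))‖ ^ 2) :=
        Real.sum_mul_le_sqrt_mul_sqrt _ _ _
    _ ≤ √(∑ a, ∑ b, ‖V a b‖ ^ 2) * √(∑ b, ∑ c, ‖W b c‖ ^ 2) := by
        rw [← hconj]
        gcongr
        · exact hy.sum_norm_sq_mulVec_le _
        · exact hw.sum_norm_sq_mulVec_le _

theorem sum_norm_mul_mulVec_le_of_pairwise_inner_eq_zero (V : Matrix l m 𝕜) (W : Matrix m n 𝕜)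
    {w : ι → EuclideanSpace 𝕜 n} (hw : Orthonormal 𝕜 w)
    (horth : Pairwise fun i j =>
      ⟪toLp 2 ((V * W) *ᵥ ofLp (w i)), toLp 2 ((V * W) *ᵥ ofLp (w j))⟫_𝕜 = 0) :
    ∑ i, ‖toLp 2 ((V * W) *ᵥ ofLp (w i))‖ ≤
      √(∑ a, ∑ b, ‖V a b‖ ^ 2) * √(∑ b, ∑ c, ‖W b c‖ ^ 2) := by
  classical
  set z := fun i => toLp 2 ((V * W) *ᵥ ofLp (w i))
  calc ∑ i, ‖z i‖
      = ∑ i : {i // z i ≠ 0}, ‖z i‖ := by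
        rw [← Finset.sum_filter_of_ne fun i _ h => norm_ne_zero_iff.mp h]
        exact Finset.sum_subtype _ (by simp) _
    _ = ∑ i : {i // z i ≠ 0}, ‖⟪(‖z i‖⁻¹ : 𝕜) • z i, z i⟫_𝕜‖ := by
        refine Finset.sum_congr rfl fun i _ => ?_
        rw [inner_inv_norm_smul_self i.2, RCLike.norm_ofReal, abs_norm]
    _ ≤ _ := (orthonormal_normalize_of_pairwise_inner_eq_zero horth).sum_norm_inner_mul_mulVec_le
        V W (hw.comp _ Subtype.val_injective)

end Orthonormal

namespace Matrix

variable [DecidableEq n] (M : Matrix m n 𝕜)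

theorem inner_mulVec_eigenvectorBasis_conjTranspose_mul_self (i j : n) :
    ⟪toLp 2 (M *ᵥ ofLp ((isHermitian_conjTranspose_mul_self M).eigenvectorBasis i)),
        toLp 2 (M *ᵥ ofLp ((isHermitian_conjTranspose_mul_self M).eigenvectorBasis j))⟫_𝕜 =
      if i = j then ((isHermitian_conjTranspose_mul_self M).eigenvalues i : 𝕜) else 0 := by
  set h := isHermitian_conjTranspose_mul_self M
  rw [inner_toLp_mulVec, mulVec_mulVec, h.mulVec_eigenvectorBasis, WithLp.toLp_smul,
    WithLp.toLp_ofLp, WithLp.toLp_ofLp, RCLike.real_smul_eq_coe_smul (K := 𝕜), inner_smul_left,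
    RCLike.conj_ofReal, orthonormal_iff_ite.mp h.eigenvectorBasis.orthonormal, mul_ite, mul_one,
    mul_zero]

theorem norm_mulVec_eigenvectorBasis_conjTranspose_mul_self (i : n) :
    ‖toLp 2 (M *ᵥ ofLp ((isHermitian_conjTranspose_mul_self M).eigenvectorBasis i))‖ =
      √((isHermitian_conjTranspose_mul_self M).eigenvalues i) := by
  have h := inner_mulVec_eigenvectorBasis_conjTranspose_mul_self M i i
  rw [if_pos rfl, inner_self_eq_norm_sq_to_K] at h
  rw [← Real.sqrt_sq (norm_nonneg _)]
  congr 1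
  exact_mod_cast h

end Matrix

theorem traceNorm_eq_sum_norm_mulVec_eigenvectorBasis [DecidableEq n] (M : Matrix m n ℂ) :
    traceNorm M =
      ∑ i, ‖toLp 2 (M *ᵥ ofLp ((isHermitian_conjTranspose_mul_self M).eigenvectorBasis i))‖ :=
  Finset.sum_congr rfl fun i _ => (norm_mulVec_eigenvectorBasis_conjTranspose_mul_self M i).symm

end

theorem contraction_trace_norm_le_one_general {m₁ m₂ m₃ : Type*}
    [Fintype m₁] [Fintype m₂] [Fintype m₃] [DecidableEq m₃]
    (v : m₁ × m₂ → ℂ) (u : m₂ × m₃ → ℂ)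
    (hv : ∑ x, Complex.normSq (v x) ≤ 1) (hu : ∑ x, Complex.normSq (u x) ≤ 1) :
    traceNorm (Matrix.of fun (a : m₁) (c : m₃) => ∑ b, v (a, b) * star (u (b, c))) ≤ 1 := by
  set V : Matrix m₁ m₂ ℂ := Matrix.of fun a b => v (a, b)
  set W : Matrix m₂ m₃ ℂ := Matrix.of fun b c => star (u (b, c))
  have hVW : (Matrix.of fun a c => ∑ b, v (a, b) * star (u (b, c))) = V * W := by
    ext a c
    simp [V, W, Matrix.mul_apply]
  have hV : ∑ a, ∑ b, ‖V a b‖ ^ 2 ≤ 1 := by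
    simpa [V, Fintype.sum_prod_type, Complex.normSq_eq_norm_sq] using hv
  have hW : ∑ b, ∑ c, ‖W b c‖ ^ 2 ≤ 1 := by
    simpa [W, Fintype.sum_prod_type, Complex.normSq_eq_norm_sq] using hu
  rw [hVW, traceNorm_eq_sum_norm_mulVec_eigenvectorBasis]
  calc _ ≤ √(∑ a, ∑ b, ‖V a b‖ ^ 2) * √(∑ b, ∑ c, ‖W b c‖ ^ 2) :=
        (isHermitian_conjTranspose_mul_self (V * W)).eigenvectorBasis.orthonormal
          |>.sum_norm_mul_mulVec_le_of_pairwise_inner_eq_zero V W fun i j hij =>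
            (inner_mulVec_eigenvectorBasis_conjTranspose_mul_self _ i j).trans (if_neg hij)
    _ ≤ 1 := mul_le_one₀ (Real.sqrt_le_one.mpr hV) (Real.sqrt_nonneg _) (Real.sqrt_le_one.mpr hW)

/-- contracting `|v⟩ ∈ K₁ ⊗ K₂` with `⟨u|`, `|u⟩ ∈ K₂ ⊗ K₃`, over `K₂`
yields an operator `K₃ → K₁` of trace norm at most 1, provided `‖v‖, ‖u‖ ≤ 1`. -/
theorem contraction_trace_norm_le_one {m₁ m₂ m₃ : Type*}
    [Fintype m₁] [DecidableEq m₁] [Fintype m₂] [Fintype m₃] [DecidableEq m₃]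
    (v : m₁ × m₂ → ℂ) (u : m₂ × m₃ → ℂ)
    (hv : ∑ x, Complex.normSq (v x) ≤ 1) (hu : ∑ x, Complex.normSq (u x) ≤ 1) :
    traceNorm (Matrix.of fun (a : m₁) (c : m₃) => ∑ b, v (a, b) * star (u (b, c))) ≤ 1 :=
  contraction_trace_norm_le_one_general v u hv hu
end

section
/- Let K be a finite-dimensional complex inner product space of dimension d, and let r_1, r_2 ∈ {0,1,…,d} and c ≥ 0. The set G_{r_1,r_2,c} of pairs of orthogonal projectors (P_1, P_2) on K with rank(P_1) = r_1, rank(P_2) = r_2, and tr|P_1 P_2| ≤ c is nonempty if and only if r_1 + r_2 − d ≤ ⌊c⌋. -/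
/-!
Write `Q = 1 - P₂`. Then `tr (P₁ P₂) = r₁ + r₂ - d + tr (Q (1 - P₁) Q) ≥ r₁ + r₂ - d`, and since
`(P₁P₂)* (P₁P₂) = P₂ P₁ P₂ ≤ 1`, its eigenvalues `λ` lie in `[0, 1]`, so
`tr |P₁ P₂| = ∑ √λ ≥ ∑ λ = tr (P₁ P₂)`. Conversely, diagonal projectors onto coordinate sets
`s`, `t` with `|s ∩ t| = max 0 (r₁ + r₂ - d)` have `P₁ P₂` a projector of that rank, whose trace
norm is its rank. As `r₁ + r₂ - d` is an integer, it is at most `c` iff it is at most `⌊c⌋`.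
-/

open Finset Matrix
open scoped Kronecker ComplexOrder

/-- An orthogonal projector: a self-adjoint idempotent. -/
def IsProjector {m : Type*} [Fintype m] [DecidableEq m] (P : Matrix m m ℂ) : Prop :=
  P.IsHermitian ∧ P * P = P

namespace Matrix
variable {n : Type*} [Fintype n] [DecidableEq n]

theorem trace_eq_rank_of_isIdempotentElem {K : Type*} [Field K] {A : Matrix n n K}
    (h : IsIdempotentElem A) : A.trace = A.rank := by
  have h' : IsIdempotentElem (toLin' A) := h.map toLinAlgEquiv'
  rw [← trace_toLin'_eq, (LinearMap.IsIdempotentElem.isProj_range _ h').trace, rank,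
    toLin'_apply']

lemma IsHermitian.eigenvalues_mem_of_isIdempotentElem {𝕜 : Type*} [RCLike 𝕜] {A : Matrix n n 𝕜}
    (hA : A.IsHermitian) (h : IsIdempotentElem A) (i : n) : hA.eigenvalues i ∈ ({0, 1} : Set ℝ) :=
  h.spectrum_subset ℝ (hA.spectrum_real_eq_range_eigenvalues ▸ ⟨i, rfl⟩)

lemma IsHermitian.eigenvalues_le_one {𝕜 : Type*} [RCLike 𝕜] {A : Matrix n n 𝕜}
    (hA : A.IsHermitian) (h : (1 - A).PosSemidef) (i : n) : hA.eigenvalues i ≤ 1 := by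
  have hv : star ⇑(hA.eigenvectorBasis i) ⬝ᵥ ⇑(hA.eigenvectorBasis i) = 1 := by
    rw [dotProduct_comm, ← EuclideanSpace.inner_eq_star_dotProduct, inner_self_eq_norm_sq_to_K,
      hA.eigenvectorBasis.orthonormal.1 i]
    simp
  have hnonneg := (RCLike.nonneg_iff.mp (h.dotProduct_mulVec_nonneg (hA.eigenvectorBasis i))).1
  rw [sub_mulVec, one_mulVec, dotProduct_sub, hv, map_sub, RCLike.one_re,
    ← hA.eigenvalues_eq i] at hnonneg
  linarith

end Matrix

section

variable {n : Type*} [Fintype n] [DecidableEq n]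

namespace IsProjector

variable {P Q : Matrix n n ℂ}

lemma conjTranspose_mul_self (hP : IsProjector P) : Pᴴ * P = P := by
  rw [hP.1.eq, hP.2]

lemma posSemidef (hP : IsProjector P) : P.PosSemidef :=
  hP.conjTranspose_mul_self ▸ posSemidef_conjTranspose_mul_self P

lemma one_sub (hP : IsProjector P) : IsProjector (1 - P) :=
  ⟨isHermitian_one.sub hP.1, (IsIdempotentElem.one_sub hP.2 :)⟩

lemma trace_eq_rank (hP : IsProjector P) : P.trace = P.rank :=
  trace_eq_rank_of_isIdempotentElem hP.2

lemma sub_mul_mul_eq (hQ : IsProjector Q) : Q - Q * P * Q = Qᴴ * (1 - P) * Q := by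
  rw [hQ.1.eq, mul_sub, mul_one, sub_mul, hQ.2]

lemma posSemidef_one_sub_mul_mul (hP : IsProjector P) (hQ : IsProjector Q) :
    (1 - Q * P * Q).PosSemidef := by
  rw [← sub_add_sub_cancel 1 Q, hQ.sub_mul_mul_eq]
  exact hQ.one_sub.posSemidef.add (hP.one_sub.posSemidef.conjTranspose_mul_mul_same Q)

lemma trace_mul_eq (hP : IsProjector P) (hQ : IsProjector Q) :
    (P * Q).trace = P.rank + Q.rank - Fintype.card n +
      ((1 - Q)ᴴ * (1 - P) * (1 - Q)).trace := by
  rw [← hQ.one_sub.sub_mul_mul_eq, trace_sub, trace_mul_cycle, hQ.one_sub.2, trace_mul_comm,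
    ← hP.trace_eq_rank, ← hQ.trace_eq_rank]
  simp only [sub_mul, one_mul, trace_sub, trace_one]
  ring

lemma rank_add_rank_sub_card_le_re_trace_mul (hP : IsProjector P) (hQ : IsProjector Q) :
    (P.rank + Q.rank - Fintype.card n : ℝ) ≤ (P * Q).trace.re := by
  have h := (Complex.nonneg_iff.mp
    (hP.one_sub.posSemidef.conjTranspose_mul_mul_same (1 - Q)).trace_nonneg).1
  rw [hP.trace_mul_eq hQ]
  simp only [Complex.add_re, Complex.sub_re, Complex.natCast_re] at h ⊢
  linarith

end IsProjector

section traceNorm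

variable {M : Matrix n n ℂ}

lemma traceNorm_eq_re_trace_of_isIdempotentElem (h : IsIdempotentElem (Mᴴ * M)) :
    traceNorm M = (Mᴴ * M).trace.re := by
  rw [traceNorm, (isHermitian_conjTranspose_mul_self M).trace_eq_sum_eigenvalues, Complex.re_sum]
  refine Finset.sum_congr rfl fun i _ ↦ ?_
  rcases (isHermitian_conjTranspose_mul_self M).eigenvalues_mem_of_isIdempotentElem h i with
    h0 | h1
  · simp [h0]
  · simp [Set.mem_singleton_iff.mp h1]

lemma IsProjector.traceNorm_eq_rank {P : Matrix n n ℂ} (hP : IsProjector P) :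
    traceNorm P = P.rank := by
  rw [traceNorm_eq_re_trace_of_isIdempotentElem (by rw [hP.conjTranspose_mul_self]; exact hP.2),
    hP.conjTranspose_mul_self, hP.trace_eq_rank, Complex.natCast_re]

lemma re_trace_le_traceNorm (h : (1 - Mᴴ * M).PosSemidef) :
    (Mᴴ * M).trace.re ≤ traceNorm M := by
  rw [traceNorm, (isHermitian_conjTranspose_mul_self M).trace_eq_sum_eigenvalues, Complex.re_sum]
  exact Finset.sum_le_sum fun i _ ↦
    Real.le_sqrt_self_iff.mpr ((isHermitian_conjTranspose_mul_self M).eigenvalues_le_one h i)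

end traceNorm

lemma IsProjector.rank_add_rank_sub_card_le_traceNorm_mul {P Q : Matrix n n ℂ}
    (hP : IsProjector P) (hQ : IsProjector Q) :
    (P.rank + Q.rank - Fintype.card n : ℝ) ≤ traceNorm (P * Q) := by
  have h : (P * Q)ᴴ * (P * Q) = Q * P * Q := by
    rw [conjTranspose_mul, hP.1.eq, hQ.1.eq, mul_assoc, ← mul_assoc P, hP.2, mul_assoc]
  refine (hP.rank_add_rank_sub_card_le_re_trace_mul hQ).trans ?_
  have := re_trace_le_traceNorm (h ▸ hP.posSemidef_one_sub_mul_mul hQ)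
  rwa [h, trace_mul_cycle, hQ.2, trace_mul_comm] at this

lemma Finset.exists_card_eq_card_eq_card_inter_eq {α : Type*} [Fintype α] [DecidableEq α]
    {r₁ r₂ : ℕ} (hr₁ : r₁ ≤ Fintype.card α) (hr₂ : r₂ ≤ Fintype.card α) :
    ∃ s t : Finset α, #s = r₁ ∧ #t = r₂ ∧ #(s ∩ t) = r₁ + r₂ - Fintype.card α := by
  obtain ⟨s, -, hs⟩ := exists_subset_card_eq (s := (univ : Finset α)) (n := r₁)
    (by rwa [card_univ])
  obtain ⟨u, hus, hu⟩ := exists_subset_card_eq (s := s) (n := r₁ + r₂ - Fintype.card α)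
    (by omega)
  obtain ⟨v, hvs, hv⟩ := exists_subset_card_eq (s := sᶜ) (n := r₂ - #u)
    (by rw [card_compl]; omega)
  have hsv : Disjoint s v := disjoint_of_subset_right hvs disjoint_compl_right
  refine ⟨s, u ∪ v, hs, ?_, ?_⟩
  · rw [card_union_of_disjoint (disjoint_of_subset_left hus hsv), hv]
    omega
  · rw [inter_union_distrib_left, inter_eq_right.mpr hus, disjoint_iff_inter_eq_empty.mp hsv,
      union_empty, hu]

def coordProjector (s : Finset n) : Matrix n n ℂ :=
  diagonal fun i ↦ if i ∈ s then 1 else 0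

lemma coordProjector_mul (s t : Finset n) :
    coordProjector s * coordProjector t = coordProjector (s ∩ t) := by
  simp only [coordProjector, diagonal_mul_diagonal, mem_inter, ite_zero_mul_ite_zero, mul_one]

lemma isProjector_coordProjector (s : Finset n) : IsProjector (coordProjector s) :=
  ⟨isHermitian_diagonal_of_self_adjoint _ (by ext; simp),
    by rw [coordProjector_mul, inter_self]⟩

lemma rank_coordProjector (s : Finset n) : (coordProjector s).rank = #s := by
  rw [coordProjector, rank_diagonal, Fintype.card_subtype]
  simp

lemma exists_isProjector_pair_traceNorm_mul_eq {r₁ r₂ : ℕ} (hr₁ : r₁ ≤ Fintype.card n)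
    (hr₂ : r₂ ≤ Fintype.card n) :
    ∃ P₁ P₂ : Matrix n n ℂ, IsProjector P₁ ∧ IsProjector P₂ ∧ P₁.rank = r₁ ∧ P₂.rank = r₂ ∧
      traceNorm (P₁ * P₂) = (r₁ + r₂ - Fintype.card n : ℕ) := by
  obtain ⟨s, t, hs, ht, hst⟩ := exists_card_eq_card_eq_card_inter_eq hr₁ hr₂
  refine ⟨coordProjector s, coordProjector t, isProjector_coordProjector s,
    isProjector_coordProjector t, by rw [rank_coordProjector, hs],
    by rw [rank_coordProjector, ht], ?_⟩
  rw [coordProjector_mul, (isProjector_coordProjector _).traceNorm_eq_rank, rank_coordProjector,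
    hst]

end

/-- the set `G_{r₁,r₂,c}` of pairs of projectors with ranks `r₁, r₂` and
`tr|P₁P₂| ≤ c` is nonempty iff `r₁ + r₂ - d ≤ ⌊c⌋`. -/
theorem projector_pairs_nonempty_iff {dK : ℕ} (r₁ r₂ : ℕ)
    (hr₁ : r₁ ≤ dK) (hr₂ : r₂ ≤ dK) (c : ℝ) (hc : 0 ≤ c) :
    (∃ P₁ P₂ : Matrix (Fin dK) (Fin dK) ℂ, IsProjector P₁ ∧ IsProjector P₂ ∧
      P₁.rank = r₁ ∧ P₂.rank = r₂ ∧ traceNorm (P₁ * P₂) ≤ c) ↔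
    (r₁ : ℤ) + (r₂ : ℤ) - (dK : ℤ) ≤ ⌊c⌋ := by
  rw [Int.le_floor]
  push_cast
  constructor
  · rintro ⟨P₁, P₂, h₁, h₂, rfl, rfl, hP⟩
    simpa using (h₁.rank_add_rank_sub_card_le_traceNorm_mul h₂).trans hP
  · intro h
    obtain ⟨P₁, P₂, h₁, h₂, hP₁, hP₂, hP⟩ :=
      exists_isProjector_pair_traceNorm_mul_eq (n := Fin dK) (r₁ := r₁) (r₂ := r₂)
        (by simpa) (by simpa)
    refine ⟨P₁, P₂, h₁, h₂, hP₁, hP₂, hP.trans_le ?_⟩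
    rw [Fintype.card_fin]
    rcases le_total (r₁ + r₂) dK with hle | hle
    · simpa [Nat.sub_eq_zero_of_le hle] using hc
    · rwa [Nat.cast_sub hle, Nat.cast_add]
end

section
/- Let A ⊆ ℝ be convex, g: A → ℝ_{≥0} convex, and t ∈ ℝ. Define G: A^m → ℝ^{2m} by G(v) = (t + g(v_1), …, t + g(v_m), t − g(v_1), …, t − g(v_m)). Then G is strictly isotone: if v majorizes w (v, w ∈ A^m), then G(v) majorizes G(w). -/
open Finset Matrix
open scoped Kronecker ComplexOrder

/-!
Write a subset of `Fin m ⊕ Fin m` as `T₁.disjSum T₂`. Indices in `T₁ ∩ T₂` contribute exactly `2t`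
and those in `T₂ \ T₁` at most `t`, so the `G(w)`-sum is at most `(#T₁ + #T₂) t + ∑_{T₁ \ T₂} g(w)`.
Karamata's inequality for the convex function `(g - c)⁺`, with `c` the `k`-th largest value of
`g ∘ v`, shows that every `k`-subset sum of `g ∘ w` is dominated by a `k`-subset sum of `g ∘ v`.
Such a set, padded with pairs `inl i, inr i` and at most one more `inl i`, is the required subset
for `G(v)`.
-/

theorem Monotone.sum_range_mul_nonpos {c D : ℕ → ℝ} (hc : Monotone c) {m : ℕ}
    (hD : ∀ k ≤ m, 0 ≤ ∑ i ∈ range k, D i) (hDm : ∑ i ∈ range m, D i = 0) :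
    ∑ i ∈ range m, c i * D i ≤ 0 := by
  change ∑ i ∈ range m, c i • D i ≤ 0
  rw [sum_range_by_parts, hDm, smul_zero, zero_sub, neg_nonpos]
  exact sum_nonneg fun i hi =>
    mul_nonneg (sub_nonneg.2 (hc i.le_succ)) (hD _ (by have := mem_range.1 hi; omega))

theorem ConvexOn.slope_le_slope {A : Set ℝ} {φ : ℝ → ℝ} (hφ : ConvexOn ℝ A φ)
    {a b a' b' : ℝ} (ha : a ∈ A) (hb : b ∈ A) (ha' : a' ∈ A) (hb' : b' ∈ A)
    (hab : a ≠ b) (hab' : a' ≠ b') (haa' : a ≤ a') (hbb' : b ≤ b') :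
    slope φ a b ≤ slope φ a' b' := by
  have hmono {p q r : ℝ} (hp : p ∈ A) (hq : q ∈ A) (hr : r ∈ A) (hqp : q ≠ p) (hrp : r ≠ p)
      (hqr : q ≤ r) : slope φ p q ≤ slope φ p r :=
    hφ.slope_mono hp ⟨hq, hqp⟩ ⟨hr, hrp⟩ hqr
  rw [slope_comm φ a b]
  by_cases hba' : b = a'
  · subst hba'
    exact hmono hb ha hb' hab hab'.symm (haa'.trans hbb')
  · calc slope φ b a ≤ slope φ b a' := hmono hb ha ha' hab (Ne.symm hba') haa'
      _ = slope φ a' b := slope_comm φ b a'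
      _ ≤ slope φ a' b' := hmono ha' hb hb' hba' hab'.symm hbb'

theorem ConvexOn.karamata_range {A : Set ℝ} {φ : ℝ → ℝ} (hφ : ConvexOn ℝ A φ) {m : ℕ}
    {x y : ℕ → ℝ} (hx : MonotoneOn x (Set.Iio m)) (hy : MonotoneOn y (Set.Iio m))
    (hxA : ∀ i < m, x i ∈ A) (hyA : ∀ i < m, y i ∈ A)
    (hxy : ∀ k ≤ m, ∑ i ∈ range k, x i ≤ ∑ i ∈ range k, y i)
    (hsum : ∑ i ∈ range m, x i = ∑ i ∈ range m, y i) :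
    ∑ i ∈ range m, φ (y i) ≤ ∑ i ∈ range m, φ (x i) := by
  set N : Set ℕ := {i | i < m ∧ x i ≠ y i}
  have hN : N.Finite := (Set.finite_Iio m).subset fun i hi => hi.1
  have hslope : MonotoneOn (fun i => slope φ (x i) (y i)) N := fun i hi j hj hij =>
    hφ.slope_le_slope (hxA i hi.1) (hyA i hi.1) (hxA j hj.1) (hyA j hj.1) hi.2 hj.2
      (hx hi.1 hj.1 hij) (hy hi.1 hj.1 hij)
  -- where `x i = y i` the slope does not enter, so any monotone extension from `N` will do
  obtain ⟨c, hc, hcN⟩ := hslope.exists_monotone_extension (hN.image _).bddBelow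
    (hN.image _).bddAbove
  have hterm : ∀ i ∈ range m, φ (y i) - φ (x i) = c i * (y i - x i) := by
    intro i hi
    by_cases hi' : x i = y i
    · simp [hi']
    · rw [← hcN ⟨mem_range.1 hi, hi'⟩, mul_comm, ← smul_eq_mul, sub_smul_slope, vsub_eq_sub]
  have hkey : ∑ i ∈ range m, c i * (y i - x i) ≤ 0 :=
    hc.sum_range_mul_nonpos (fun k hk => by simpa [sum_sub_distrib] using hxy k hk)
      (by simp [sum_sub_distrib, hsum])
  rw [← sum_congr rfl hterm, sum_sub_distrib] at hkey
  linarith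

theorem MonotoneOn.sum_range_le_sum {F : ℕ → ℝ} {m : ℕ} (hF : MonotoneOn F (Set.Iio m))
    {R : Finset ℕ} (hR : R ⊆ range m) : ∑ n ∈ range #R, F n ≤ ∑ n ∈ R, F n := by
  induction R using Finset.strongInduction with
  | H R ih =>
    rcases R.eq_empty_or_nonempty with rfl | hne
    · simp
    set r := R.max' hne
    have hrR : r ∈ R := R.max'_mem hne
    have hRr : #(R.erase r) ≤ r := by
      simpa using card_le_card fun a ha => mem_range.2 <|
        (R.lt_max'_of_mem_erase_max' hne ha)
    have hrm : r < m := mem_range.1 (hR hrR)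
    calc ∑ n ∈ range #R, F n = ∑ n ∈ range #(R.erase r), F n + F #(R.erase r) := by
          rw [← sum_range_succ, card_erase_add_one hrR]
      _ ≤ ∑ n ∈ R.erase r, F n + F r :=
          add_le_add (ih _ (erase_ssubset hrR) ((erase_subset r R).trans hR))
            (hF (hRr.trans_lt hrm) hrm hRr)
      _ = ∑ n ∈ R, F n := sum_erase_add R F hrR

theorem Majorizes.exists_card_eq_sum_le {ι : Type*} [Fintype ι] [DecidableEq ι]
    {x y : ι → ℝ} (h : Majorizes x y) (T : Finset ι) :
    ∃ S : Finset ι, #S = #T ∧ ∑ i ∈ S, x i ≤ ∑ j ∈ T, y j := by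
  obtain ⟨S, hS, hle⟩ := h.1 Tᶜ
  refine ⟨Sᶜ, by rw [card_compl, hS, card_compl, Nat.sub_sub_self (card_le_univ T)], ?_⟩
  have := h.2
  rw [← sum_add_sum_compl T y, ← sum_add_sum_compl S x] at this
  linarith

noncomputable def sortedSeq {m : ℕ} (u : Fin m → ℝ) (n : ℕ) : ℝ :=
  if h : n < m then u (Tuple.sort u ⟨n, h⟩) else 0

section sortedSeq

variable {m : ℕ} (u : Fin m → ℝ)

theorem sortedSeq_of_lt {n : ℕ} (h : n < m) : sortedSeq u n = u (Tuple.sort u ⟨n, h⟩) :=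
  dif_pos h

theorem sortedSeq_monotoneOn : MonotoneOn (sortedSeq u) (Set.Iio m) := fun i hi j hj hij => by
  rw [sortedSeq_of_lt u hi, sortedSeq_of_lt u hj]
  exact Tuple.monotone_sort u (Fin.mk_le_mk.2 hij)

theorem sum_map_valEmbedding_sortedSeq (F : ℝ → ℝ) (I : Finset (Fin m)) :
    ∑ n ∈ I.map Fin.valEmbedding, F (sortedSeq u n) = ∑ i ∈ I, F (u (Tuple.sort u i)) := by
  simp [sortedSeq_of_lt u]

theorem sum_range_sortedSeq (F : ℝ → ℝ) :
    ∑ n ∈ range m, F (sortedSeq u n) = ∑ i, F (u i) := by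
  rw [← Nat.Iio_eq_range, ← Fin.map_valEmbedding_univ, sum_map_valEmbedding_sortedSeq]
  exact Equiv.sum_comp (Tuple.sort u) (F ∘ u)

theorem exists_sum_eq_sum_sortedSeq {R : Finset ℕ} (hR : R ⊆ range m) :
    ∃ T : Finset (Fin m), #T = #R ∧ ∑ i ∈ T, u i = ∑ n ∈ R, sortedSeq u n := by
  have hR' : ∀ n ∈ R, n < m := fun n hn => mem_range.1 (hR hn)
  refine ⟨(R.attachFin hR').map (Tuple.sort u).toEmbedding, by simp, ?_⟩
  conv_rhs => rw [← map_valEmbedding_attachFin hR']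
  rw [sum_map]
  exact (sum_map_valEmbedding_sortedSeq u id _).symm

theorem exists_sum_sortedSeq_eq (T : Finset (Fin m)) :
    ∃ R ⊆ range m, #R = #T ∧ ∑ n ∈ R, sortedSeq u n = ∑ i ∈ T, u i := by
  refine ⟨(T.map (Tuple.sort u).symm.toEmbedding).map Fin.valEmbedding, ?_, by simp, ?_⟩
  · intro n hn
    obtain ⟨i, -, rfl⟩ := mem_map.1 hn
    exact mem_range.2 i.isLt
  · refine (sum_map_valEmbedding_sortedSeq u id _).trans ?_
    simp

end sortedSeq

theorem ConvexOn.sum_le_sum_of_majorizes {m : ℕ} {A : Set ℝ} {φ : ℝ → ℝ}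
    (hφ : ConvexOn ℝ A φ) {v w : Fin m → ℝ} (hv : ∀ i, v i ∈ A) (hw : ∀ i, w i ∈ A)
    (hmaj : Majorizes v w) :
    ∑ i, φ (w i) ≤ ∑ i, φ (v i) := by
  have hmem {u : Fin m → ℝ} (hu : ∀ i, u i ∈ A) (n : ℕ) (hn : n < m) : sortedSeq u n ∈ A := by
    rw [sortedSeq_of_lt u hn]
    exact hu _
  have hpartial (k : ℕ) (hk : k ≤ m) :
      ∑ n ∈ range k, sortedSeq v n ≤ ∑ n ∈ range k, sortedSeq w n := by
    obtain ⟨T, hT, hTw⟩ := exists_sum_eq_sum_sortedSeq w (range_subset_range.2 hk)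
    obtain ⟨S, hS, hSv⟩ := hmaj.exists_card_eq_sum_le T
    obtain ⟨R, hRm, hR, hRv⟩ := exists_sum_sortedSeq_eq v S
    calc ∑ n ∈ range k, sortedSeq v n = ∑ n ∈ range #R, sortedSeq v n := by
          rw [hR, hS, hT, card_range]
      _ ≤ ∑ n ∈ R, sortedSeq v n := (sortedSeq_monotoneOn v).sum_range_le_sum hRm
      _ ≤ ∑ n ∈ range k, sortedSeq w n := by rw [hRv, ← hTw]; exact hSv
  have hsum : ∑ n ∈ range m, sortedSeq v n = ∑ n ∈ range m, sortedSeq w n := by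
    exact (sum_range_sortedSeq v id).trans <| hmaj.2.symm.trans (sum_range_sortedSeq w id).symm
  simpa only [sum_range_sortedSeq] using hφ.karamata_range (sortedSeq_monotoneOn v)
    (sortedSeq_monotoneOn w) (hmem hv) (hmem hw) hpartial hsum

theorem exists_card_eq_forall_notMem_le {ι : Type*} [Fintype ι] [DecidableEq ι] (f : ι → ℝ)
    {k : ℕ} (hk : k ≤ Fintype.card ι) :
    ∃ S : Finset ι, #S = k ∧ ∀ i ∈ S, ∀ j ∉ S, f j ≤ f i := by
  induction k with
  | zero => exact ⟨∅, card_empty, by simp⟩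
  | succ k ih =>
    obtain ⟨S, hS, hSf⟩ := ih (by omega)
    obtain ⟨j₀, hj₀, hj₀max⟩ := exists_max_image Sᶜ f <| card_pos.1 <| by
      rw [card_compl, hS]; omega
    have hj₀S : j₀ ∉ S := mem_compl.1 hj₀
    refine ⟨insert j₀ S, by rw [card_insert_of_notMem hj₀S, hS], ?_⟩
    intro i hi j hj
    rw [mem_insert, not_or] at hj
    rcases mem_insert.1 hi with rfl | hi
    · exact hj₀max j (mem_compl.2 hj.2)
    · exact hSf i hi j hj.2

theorem Majorizes.exists_card_eq_sum_comp_le {m : ℕ} {A : Set ℝ} {g : ℝ → ℝ}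
    (hg : ConvexOn ℝ A g) {v w : Fin m → ℝ} (hv : ∀ i, v i ∈ A) (hw : ∀ i, w i ∈ A)
    (hmaj : Majorizes v w) (T : Finset (Fin m)) :
    ∃ S : Finset (Fin m), #S = #T ∧ ∑ j ∈ T, g (w j) ≤ ∑ i ∈ S, g (v i) := by
  obtain ⟨S, hS, hSg⟩ := exists_card_eq_forall_notMem_le (fun i => g (v i))
    (card_le_univ T)
  refine ⟨S, hS, ?_⟩
  rcases S.eq_empty_or_nonempty with rfl | hne
  · simp [card_eq_zero.1 hS.symm]
  set c := S.inf' hne fun i => g (v i)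
  set φ : ℝ → ℝ := fun x => max (g x - c) 0
  have hφ : ConvexOn ℝ A φ := (hg.sub (concaveOn_const c hg.1)).sup (convexOn_const 0 hg.1)
  have hφS : ∀ i ∈ S, φ (v i) = g (v i) - c := fun i hi =>
    max_eq_left (sub_nonneg.2 (inf'_le _ hi))
  have hφSc : ∀ i ∉ S, φ (v i) = 0 := fun i hi =>
    max_eq_right (sub_nonpos.2 (le_inf' hne _ fun j hj => hSg j hj i hi))
  have hsub : ∑ j ∈ T, (g (w j) - c) ≤ ∑ i ∈ S, (g (v i) - c) :=
    calc ∑ j ∈ T, (g (w j) - c) ≤ ∑ j ∈ T, φ (w j) := sum_le_sum fun j _ => le_max_left _ _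
      _ ≤ ∑ j, φ (w j) := sum_le_univ_sum_of_nonneg fun j => le_max_right _ _
      _ ≤ ∑ i, φ (v i) := hφ.sum_le_sum_of_majorizes hv hw hmaj
      _ = ∑ i ∈ S, φ (v i) := (sum_subset (subset_univ S) fun i _ hi => hφSc i hi).symm
      _ = ∑ i ∈ S, (g (v i) - c) := sum_congr rfl hφS
  simpa [sum_sub_distrib, hS] using hsub

theorem sum_disjSum_elim_add_sub {ι : Type*} (f : ι → ℝ) (t : ℝ) (T₁ T₂ : Finset ι) :
    ∑ x ∈ T₁.disjSum T₂, Sum.elim (fun i => t + f i) (fun i => t - f i) x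
      = (#T₁ + #T₂) * t + (∑ i ∈ T₁, f i - ∑ i ∈ T₂, f i) := by
  simp only [sum_disjSum, Sum.elim_inl, Sum.elim_inr, sum_add_distrib, sum_sub_distrib,
    sum_const, nsmul_eq_mul]
  ring

theorem exists_card_eq_le_sum_elim {ι : Type*} [Fintype ι] [DecidableEq ι] {f : ι → ℝ}
    (hf : ∀ i, 0 ≤ f i) (t : ℝ) (S₀ : Finset ι) {n : ℕ} (hS₀n : #S₀ ≤ n)
    (hn : n + #S₀ ≤ 2 * Fintype.card ι) :
    ∃ S : Finset (ι ⊕ ι), #S = n ∧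
      n * t + ∑ i ∈ S₀, f i ≤ ∑ x ∈ S, Sum.elim (fun i => t + f i) (fun i => t - f i) x := by
  -- `S₀`, at most one further `inl i`, and pairs `inl i, inr i` (each worth exactly `2t`)
  obtain ⟨B, hS₀B, -, hB⟩ := exists_subsuperset_card_eq (subset_univ S₀)
    (n := #S₀ + (n - #S₀) % 2) (by omega) (by rw [card_univ]; omega)
  obtain ⟨P, hPB, hP⟩ := exists_subset_card_eq (s := Bᶜ) (n := (n - #S₀) / 2)
    (by rw [card_compl, hB]; omega)
  have hBP : Disjoint B P := disjoint_right.2 fun i hi => mem_compl.1 (hPB hi)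
  refine ⟨(B ∪ P).disjSum P, ?_, ?_⟩
  · rw [card_disjSum, card_union_of_disjoint hBP]
    omega
  · have hcard : ((#(B ∪ P) + #P : ℕ) : ℝ) = n := by
      rw [card_union_of_disjoint hBP]
      norm_cast
      omega
    rw [sum_disjSum_elim_add_sub, sum_union hBP, ← Nat.cast_add, hcard, add_sub_cancel_right]
    gcongr
    exact fun i _ _ => hf i

theorem isotone_G_general {m : ℕ} (A : Set ℝ)
    (g : ℝ → ℝ) (hg : ConvexOn ℝ A g) (hg0 : ∀ a ∈ A, 0 ≤ g a) (t : ℝ)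
    (v w : Fin m → ℝ) (hv : ∀ i, v i ∈ A) (hw : ∀ i, w i ∈ A)
    (hmaj : Majorizes v w) :
    Majorizes
      (Sum.elim (fun i => t + g (v i)) (fun i => t - g (v i)) : Fin m ⊕ Fin m → ℝ)
      (Sum.elim (fun i => t + g (w i)) (fun i => t - g (w i)) : Fin m ⊕ Fin m → ℝ) := by
  refine ⟨fun T => ?_, by simp [Fintype.sum_sum_type, sum_add_distrib, sum_sub_distrib]⟩
  obtain ⟨T₁, T₂, rfl⟩ : ∃ T₁ T₂, T₁.disjSum T₂ = T :=
    ⟨T.toLeft, T.toRight, T.toLeft_disjSum_toRight⟩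
  obtain ⟨S₀, hS₀, hS₀w⟩ := hmaj.exists_card_eq_sum_comp_le hg hv hw (T₁ \ T₂)
  have hcard : #(T₁ \ T₂) + #T₂ ≤ m := by
    simpa [card_sdiff_add_card] using card_le_univ (T₁ ∪ T₂)
  obtain ⟨S, hS, hSv⟩ := exists_card_eq_le_sum_elim (fun i => hg0 _ (hv i)) t S₀
    (n := #T₁ + #T₂) (by grind [card_le_card sdiff_subset])
    (by have := card_le_univ T₁; simp only [Fintype.card_fin] at *; omega)
  have hw_sdiff : ∑ i ∈ T₁, g (w i) - ∑ i ∈ T₂, g (w i) ≤ ∑ i ∈ T₁ \ T₂, g (w i) := by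
    rw [← sum_inter_add_sum_sdiff T₁ T₂]
    have : ∑ i ∈ T₁ ∩ T₂, g (w i) ≤ ∑ i ∈ T₂, g (w i) :=
      sum_le_sum_of_subset_of_nonneg inter_subset_right fun i _ _ => hg0 _ (hw i)
    linarith
  refine ⟨S, by rw [hS, card_disjSum], ?_⟩
  rw [sum_disjSum_elim_add_sub]
  push_cast at hSv
  linarith

/-- for convex `A ⊆ ℝ`, convex nonnegative `g : A → ℝ≥0` and `t ∈ ℝ`, the
map `G(v) = (t + g(v₁), …, t + g(v_m)) ⊕ (t − g(v₁), …, t − g(v_m))` is strictly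
isotone: if `v` majorizes `w` then `G(v)` majorizes `G(w)`. -/
theorem isotone_G {m : ℕ} (A : Set ℝ) (hA : Convex ℝ A)
    (g : ℝ → ℝ) (hg : ConvexOn ℝ A g) (hg0 : ∀ a ∈ A, 0 ≤ g a) (t : ℝ)
    (v w : Fin m → ℝ) (hv : ∀ i, v i ∈ A) (hw : ∀ i, w i ∈ A)
    (hmaj : Majorizes v w) :
    Majorizes
      (Sum.elim (fun i => t + g (v i)) (fun i => t - g (v i)) : Fin m ⊕ Fin m → ℝ)
      (Sum.elim (fun i => t + g (w i)) (fun i => t - g (w i)) : Fin m ⊕ Fin m → ℝ) :=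
  isotone_G_general A g hg hg0 t v w hv hw hmaj
end
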